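/- arXiv:math/0612474 — 6 statements merged into one kernel-verified Lean document; each statement's English description precedes it below -/
import Mathlib

section
/- For all complex numbers q and z with |q| < 1, the sum over n ≥ 0 of (-1)^n q^(n(n+1)/2) z^n / ((1-q)(1-q^2)⋯(1-q^n)) equals the infinite product over n > 0 of (1 - q^n z). -/
open Filter Finset


noncomputable def eulerA (q : ℂ) (n : ℕ) : ℂ :=
  ((-1 : ℂ) ^ n * q ^ (n * (n + 1) / 2)) / ∏ i ∈ Finset.range n, (1 - q ^ (i + 1))

lemma factor_ne (q : ℂ) (hq : ‖q‖ < 1) (n : ℕ) : (1 : ℂ) - q ^ (n + 1) ≠ 0 := by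
  intro h
  have : ‖q ^ (n + 1)‖ < 1 := by
    rw [norm_pow]
    exact pow_lt_one₀ (norm_nonneg q) hq (Nat.succ_ne_zero n)
  rw [sub_eq_zero] at h
  rw [← h] at this
  simp at this

lemma eulerA_zero (q : ℂ) : eulerA q 0 = 1 := by simp [eulerA]

lemma eulerA_rec (q : ℂ) (hq : ‖q‖ < 1) (n : ℕ) :
    eulerA q (n + 1) * (1 - q ^ (n + 1)) = -(q ^ (n + 1)) * eulerA q n := by
  have hP : (∏ i ∈ Finset.range n, (1 - q ^ (i + 1))) ≠ 0 :=
    Finset.prod_ne_zero_iff.2 fun i _ => factor_ne q hq i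
  have hB := factor_ne q hq n
  have he : (n + 1) * (n + 1 + 1) / 2 = n * (n + 1) / 2 + (n + 1) := by
    obtain ⟨k, hk⟩ := Nat.even_mul_succ_self n
    have h3 : (n + 1) * (n + 1 + 1) = n * (n + 1) + 2 * (n + 1) := by ring
    omega
  rw [eulerA, eulerA, Finset.prod_range_succ, he, pow_add]
  field_simp
  ring
lemma norm_eulerA_succ (q : ℂ) (hq : ‖q‖ < 1) (n : ℕ) :
    ‖eulerA q (n + 1)‖ * (1 - ‖q‖) ≤ ‖q‖ ^ (n + 1) * ‖eulerA q n‖ := by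
  have h2 : 1 - ‖q‖ ≤ ‖1 - q ^ (n + 1)‖ := by
    have ha : ‖q ^ (n + 1)‖ ≤ ‖q‖ := by
      rw [norm_pow]
      calc ‖q‖ ^ (n + 1) ≤ ‖q‖ ^ 1 :=
        pow_le_pow_of_le_one (norm_nonneg q) hq.le (by omega)
      _ = ‖q‖ := pow_one _
    have hb := norm_sub_norm_le (1 : ℂ) (q ^ (n + 1))
    rw [norm_one] at hb
    linarith
  have h3 : ‖eulerA q (n + 1)‖ * ‖1 - q ^ (n + 1)‖ = ‖q‖ ^ (n + 1) * ‖eulerA q n‖ := by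
    rw [← norm_mul, eulerA_rec q hq n, norm_mul, norm_neg, norm_pow]
  nlinarith [norm_nonneg (eulerA q (n + 1))]

lemma summable_norm_eulerA (q : ℂ) (hq : ‖q‖ < 1) (s : ℕ) (r : ℝ) (hr : 0 ≤ r) :
    Summable (fun n => ‖eulerA q (n + s)‖ * r ^ n) := by
  have hq1 : (0 : ℝ) < 1 - ‖q‖ := by linarith
  apply summable_of_ratio_norm_eventually_le (r := 1 / 2) (by norm_num)
  have htend : Tendsto (fun n : ℕ => ‖q‖ ^ (n + s + 1) * r / (1 - ‖q‖)) atTop (nhds 0) := by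
    have h0 : Tendsto (fun n : ℕ => ‖q‖ ^ n) atTop (nhds 0) :=
      tendsto_pow_atTop_nhds_zero_of_lt_one (norm_nonneg q) hq
    have := ((h0.comp (tendsto_add_atTop_nat (s + 1))).mul_const r).div_const (1 - ‖q‖)
    simpa [add_assoc] using this
  filter_upwards [htend.eventually_le_const (by norm_num : (0:ℝ) < 1/2)] with n hn
  have hb := norm_eulerA_succ q hq (n + s)
  have hnn : (0:ℝ) ≤ ‖eulerA q (n + s)‖ * r ^ n :=
    mul_nonneg (norm_nonneg _) (pow_nonneg hr n)
  have hnn1 : (0:ℝ) ≤ ‖eulerA q (n + 1 + s)‖ * r ^ (n + 1) :=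
    mul_nonneg (norm_nonneg _) (pow_nonneg hr _)
  rw [Real.norm_of_nonneg hnn1, Real.norm_of_nonneg hnn]
  have key : ‖eulerA q (n + 1 + s)‖ * r ^ (n + 1)
      ≤ (‖q‖ ^ (n + s + 1) * r / (1 - ‖q‖)) * (‖eulerA q (n + s)‖ * r ^ n) := by
    have h4 : ‖eulerA q (n + s + 1)‖ ≤ ‖q‖ ^ (n + s + 1) * ‖eulerA q (n + s)‖ / (1 - ‖q‖) := by
      rw [le_div_iff₀ hq1]; exact hb
    have h5 : n + 1 + s = n + s + 1 := by omega
    rw [h5, pow_succ]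
    calc ‖eulerA q (n + s + 1)‖ * (r ^ n * r)
        ≤ (‖q‖ ^ (n + s + 1) * ‖eulerA q (n + s)‖ / (1 - ‖q‖)) * (r ^ n * r) := by
          apply mul_le_mul_of_nonneg_right h4 (mul_nonneg (pow_nonneg hr n) hr)
      _ = (‖q‖ ^ (n + s + 1) * r / (1 - ‖q‖)) * (‖eulerA q (n + s)‖ * r ^ n) := by ring
  calc ‖eulerA q (n + 1 + s)‖ * r ^ (n + 1)
      ≤ (‖q‖ ^ (n + s + 1) * r / (1 - ‖q‖)) * (‖eulerA q (n + s)‖ * r ^ n) := key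
    _ ≤ 1 / 2 * (‖eulerA q (n + s)‖ * r ^ n) := mul_le_mul_of_nonneg_right hn hnn

lemma summable_eulerA_mul (q z : ℂ) (hq : ‖q‖ < 1) :
    Summable (fun n => eulerA q n * z ^ n) := by
  apply Summable.of_norm
  have := summable_norm_eulerA q hq 0 ‖z‖ (norm_nonneg z)
  simpa [norm_mul, norm_pow] using this
lemma func_eq (q z : ℂ) (hq : ‖q‖ < 1) :
    ∑' n, eulerA q n * z ^ n = (1 - q * z) * ∑' n, eulerA q n * (q * z) ^ n := by
  have hS1 := summable_eulerA_mul q z hq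
  have hS2 := summable_eulerA_mul q (q * z) hq
  have hS3 : Summable (fun n => (1 - q * z) * (eulerA q n * (q * z) ^ n)) := hS2.mul_left _
  rw [← tsum_mul_left]
  set u : ℕ → ℂ := fun n => eulerA q n * (1 - q ^ n) * z ^ n with hu
  have hd : ∀ n, eulerA q n * z ^ n - (1 - q * z) * (eulerA q n * (q * z) ^ n)
      = u n - u (n + 1) := by
    intro n
    have hr := eulerA_rec q hq n
    simp only [hu]
    linear_combination (z : ℂ) ^ (n + 1) * hr
  have hu0 : u 0 = 0 := by simp [hu]
  have hulim : Tendsto u atTop (nhds 0) := by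
    have h1 := hS1.tendsto_atTop_zero
    have h2 := hS2.tendsto_atTop_zero
    have : u = fun n => eulerA q n * z ^ n - eulerA q n * (q * z) ^ n := by
      funext n; simp only [hu]; ring
    rw [this]
    simpa using h1.sub h2
  have hsummable : Summable (fun n => eulerA q n * z ^ n
      - (1 - q * z) * (eulerA q n * (q * z) ^ n)) := hS1.sub hS3
  have hzero : HasSum (fun n => eulerA q n * z ^ n
      - (1 - q * z) * (eulerA q n * (q * z) ^ n)) 0 := by
    rw [hsummable.hasSum_iff_tendsto_nat]
    have : (fun N => ∑ i ∈ Finset.range N,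
        (eulerA q i * z ^ i - (1 - q * z) * (eulerA q i * (q * z) ^ i)))
        = fun N => u 0 - u N := by
      funext N
      rw [← Finset.sum_range_sub' u N]
      exact Finset.sum_congr rfl fun i _ => hd i
    rw [this, hu0]
    simpa using hulim.const_sub 0
  have := (hsummable.hasSum.unique hzero)
  rw [Summable.tsum_sub hS1 hS3] at this
  rw [sub_eq_zero] at this
  exact this
lemma iterate_eq (q z : ℂ) (hq : ‖q‖ < 1) (N : ℕ) :
    ∑' n, eulerA q n * z ^ n =
      (∏ k ∈ Finset.range N, (1 - q ^ (k + 1) * z)) * ∑' n, eulerA q n * (q ^ N * z) ^ n := by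
  induction N with
  | zero => simp
  | succ N ih =>
    rw [ih, func_eq q (q ^ N * z) hq, Finset.prod_range_succ]
    have h1 : q * (q ^ N * z) = q ^ (N + 1) * z := by ring
    rw [h1]
    ring

lemma tail_bound (q z : ℂ) (hq : ‖q‖ < 1) (w : ℂ) (hw : ‖w‖ ≤ ‖z‖) :
    ‖(∑' n, eulerA q n * w ^ n) - 1‖ ≤ (∑' n, ‖eulerA q (n + 1)‖ * ‖z‖ ^ n) * ‖w‖ := by
  have hsw := summable_eulerA_mul q w hq
  have h0 : ∑' n, eulerA q n * w ^ n = 1 + ∑' n, eulerA q (n + 1) * w ^ (n + 1) := by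
    rw [Summable.tsum_eq_zero_add hsw, eulerA_zero]
    simp
  rw [h0, add_sub_cancel_left, ← tsum_mul_right]
  apply tsum_of_norm_bounded (((summable_norm_eulerA q hq 1 ‖z‖ (norm_nonneg z)).mul_right ‖w‖).hasSum)
  intro n
  rw [norm_mul, norm_pow, pow_succ]
  calc ‖eulerA q (n + 1)‖ * (‖w‖ ^ n * ‖w‖)
      ≤ ‖eulerA q (n + 1)‖ * (‖z‖ ^ n * ‖w‖) := by
        apply mul_le_mul_of_nonneg_left _ (norm_nonneg _)
        exact mul_le_mul_of_nonneg_right (pow_le_pow_left₀ (norm_nonneg w) hw n) (norm_nonneg w)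
    _ = ‖eulerA q (n + 1)‖ * ‖z‖ ^ n * ‖w‖ := by ring

lemma tendsto_tail (q z : ℂ) (hq : ‖q‖ < 1) :
    Tendsto (fun N => ∑' n, eulerA q n * (q ^ N * z) ^ n) atTop (nhds 1) := by
  rw [tendsto_iff_norm_sub_tendsto_zero]
  set C := ∑' n, ‖eulerA q (n + 1)‖ * ‖z‖ ^ n with hC
  apply squeeze_zero (fun N => norm_nonneg _) (g := fun N => C * (‖q‖ ^ N * ‖z‖))
  · intro N
    have hw : ‖q ^ N * z‖ ≤ ‖z‖ := by
      rw [norm_mul, norm_pow]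
      calc ‖q‖ ^ N * ‖z‖ ≤ 1 * ‖z‖ := by
            exact mul_le_mul_of_nonneg_right (pow_le_one₀ (norm_nonneg q) hq.le) (norm_nonneg z)
        _ = ‖z‖ := one_mul _
    have := tail_bound q z hq (q ^ N * z) hw
    rw [norm_mul, norm_pow] at this
    exact this
  · have h0 : Tendsto (fun N : ℕ => ‖q‖ ^ N) atTop (nhds 0) :=
      tendsto_pow_atTop_nhds_zero_of_lt_one (norm_nonneg q) hq
    have := (h0.mul_const ‖z‖).const_mul C
    simpa using this

lemma mult_factors (q z : ℂ) (hq : ‖q‖ < 1) (hne : ∀ n, (1 : ℂ) - q ^ (n + 1) * z ≠ 0) :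
    Multipliable (fun n => (1 : ℂ) - q ^ (n + 1) * z) := by
  apply Complex.multipliable_of_summable_log
  apply Summable.of_norm_bounded_eventually_nat (g := fun n => 3 / 2 * ‖z‖ * ‖q‖ ^ (n + 1))
  · exact (((summable_nat_add_iff 1).mpr
      (summable_geometric_of_lt_one (norm_nonneg q) hq)).mul_left _)
  · have h0 : Tendsto (fun n : ℕ => ‖q‖ ^ (n + 1) * ‖z‖) atTop (nhds 0) := by
      have := ((tendsto_pow_atTop_nhds_zero_of_lt_one (norm_nonneg q) hq).comp
        (tendsto_add_atTop_nat 1)).mul_const ‖z‖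
      simpa using this
    filter_upwards [h0.eventually_le_const (by norm_num : (0:ℝ) < 1/2)] with n hn
    have hz2 : ‖-(q ^ (n + 1) * z)‖ ≤ 1 / 2 := by
      rw [norm_neg, norm_mul, norm_pow]; exact hn
    have := Complex.norm_log_one_add_half_le_self hz2
    rw [show (1 : ℂ) + -(q ^ (n + 1) * z) = 1 - q ^ (n + 1) * z by ring] at this
    calc ‖Complex.log (1 - q ^ (n + 1) * z)‖ ≤ 3 / 2 * ‖-(q ^ (n + 1) * z)‖ := this
      _ = 3 / 2 * ‖z‖ * ‖q‖ ^ (n + 1) := by rw [norm_neg, norm_mul, norm_pow]; ring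

lemma tprod_of_zero {f : ℕ → ℂ} (k : ℕ) (hk : f k = 0) : ∏' n, f n = 0 := by
  have h : HasProd f 0 := by
    rw [HasProd]
    apply Tendsto.congr' _ tendsto_const_nhds
    filter_upwards [eventually_ge_atTop ({k} : Finset ℕ)] with s hs
    exact (Finset.prod_eq_zero (hs (Finset.mem_singleton_self k)) hk).symm
  exact h.tprod_eq.symm ▸ rfl

/-- Euler's first product identity: for `‖q‖ < 1` and all `z`,
`∑_{n≥0} (-1)^n q^(n(n+1)/2) z^n / ((1-q)⋯(1-q^n)) = ∏_{n>0} (1 - q^n z)`. -/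
theorem euler_first_product_identity (q z : ℂ) (hq : ‖q‖ < 1) :
    ∑' n : ℕ, ((-1 : ℂ) ^ n * q ^ (n * (n + 1) / 2) * z ^ n) /
      (∏ i ∈ Finset.range n, (1 - q ^ (i + 1))) =
    ∏' n : ℕ, (1 - q ^ (n + 1) * z) := by
  have hterm : ∀ n : ℕ, ((-1 : ℂ) ^ n * q ^ (n * (n + 1) / 2) * z ^ n) /
      (∏ i ∈ Finset.range n, (1 - q ^ (i + 1))) = eulerA q n * z ^ n := fun n =>
    mul_div_right_comm _ _ _
  rw [tsum_congr hterm]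
  by_cases hzero : ∃ k : ℕ, (1 : ℂ) - q ^ (k + 1) * z = 0
  · obtain ⟨k, hk⟩ := hzero
    rw [tprod_of_zero k hk, iterate_eq q z hq (k + 1),
      Finset.prod_eq_zero (Finset.mem_range.2 (Nat.lt_succ_self k)) hk, zero_mul]
  · push_neg at hzero
    have hm := mult_factors q z hq hzero
    have h1 := hm.hasProd.tendsto_prod_nat
    have h3 := h1.mul (tendsto_tail q z hq)
    have h4 : (fun N => (∏ k ∈ Finset.range N, (1 - q ^ (k + 1) * z)) *
        ∑' n, eulerA q n * (q ^ N * z) ^ n) = fun _ => ∑' n, eulerA q n * z ^ n :=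
      funext fun N => (iterate_eq q z hq N).symm
    rw [h4] at h3
    have h5 := tendsto_nhds_unique h3 tendsto_const_nhds
    rw [mul_one] at h5
    exact h5.symm
end

section
/- For complex q with 0 < |q| < 1 and z ≠ 0, the sum over all integers n of (-1)^n q^(n^2) z^n equals the product over n > 0 of (1 - q^(2n))(1 - q^(2n-1) z)(1 - q^(2n-1) z^(-1)). -/
open Finset Filter Topology

namespace JTP

/-- Partial product `∏_{j=1}^{N} (1 - Q^j)`. -/
noncomputable def P (Q : ℂ) (N : ℕ) : ℂ := ∏ j ∈ range N, (1 - Q ^ (j + 1))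

/-- Gaussian binomial coefficient as a complex number. -/
noncomputable def gb (Q : ℂ) (n m : ℕ) : ℂ :=
  if m ≤ n then (∏ j ∈ range m, (1 - Q ^ (n - m + j + 1))) / P Q m else 0

variable {Q : ℂ}

lemma P_ne_zero (hQ : ∀ j : ℕ, (1 : ℂ) - Q ^ (j + 1) ≠ 0) (N : ℕ) : P Q N ≠ 0 :=
  Finset.prod_ne_zero_iff.2 fun j _ => hQ j

lemma gb_zero (n : ℕ) : gb Q n 0 = 1 := by simp [gb, P]

lemma gb_diag (hQ : ∀ j : ℕ, (1 : ℂ) - Q ^ (j + 1) ≠ 0) (n : ℕ) : gb Q n n = 1 := by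
  simp only [gb, le_refl, if_true, Nat.sub_self, zero_add]
  exact div_self (P_ne_zero hQ n)

lemma gb_of_gt {n k : ℕ} (h : n < k) : gb Q n k = 0 := by
  simp [gb, not_le.2 h]

lemma P_succ (N : ℕ) : P Q (N + 1) = P Q N * (1 - Q ^ (N + 1)) := by
  simp [P, prod_range_succ]

lemma gb_pascal (hQ : ∀ j : ℕ, (1 : ℂ) - Q ^ (j + 1) ≠ 0) (m r : ℕ) :
    gb Q (m + r + 1) (m + 1) = gb Q (m + r) (m + 1) + Q ^ r * gb Q (m + r) m := by
  rcases Nat.eq_zero_or_pos r with rfl | hr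
  · simp only [Nat.add_zero]
    rw [gb_of_gt (n := m) (k := m + 1) (by omega), gb_diag hQ, gb_diag hQ]
    ring
  obtain ⟨s, rfl⟩ := Nat.exists_eq_add_of_lt hr
  simp only [Nat.zero_add] at *
  have h1 : m + 1 ≤ m + (s + 1) + 1 := by omega
  have h2 : m + 1 ≤ m + (s + 1) := by omega
  have h3 : m ≤ m + (s + 1) := by omega
  simp only [gb, h1, h2, h3, if_true]
  have e1 : m + (s + 1) + 1 - (m + 1) = s + 1 := by omega
  have e2 : m + (s + 1) - (m + 1) = s := by omega
  have e3 : m + (s + 1) - m = s + 1 := by omega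
  rw [e1, e2, e3, P_succ]
  have hA : (∏ j ∈ range (m + 1), (1 - Q ^ (s + 1 + j + 1)))
      = (∏ j ∈ range m, (1 - Q ^ (s + 1 + j + 1))) * (1 - Q ^ (s + 1 + m + 1)) := by
    rw [prod_range_succ]
  have hB : (∏ j ∈ range (m + 1), (1 - Q ^ (s + j + 1)))
      = (1 - Q ^ (s + 1)) * ∏ j ∈ range m, (1 - Q ^ (s + 1 + j + 1)) := by
    rw [prod_range_succ']
    have hre : ∀ j : ℕ, s + (j + 1) + 1 = s + 1 + j + 1 := by omega
    simp only [hre, Nat.add_zero]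
    ring
  have hfac : (1 : ℂ) - Q ^ (s + 1 + m + 1) = (1 - Q ^ (s + 1)) + Q ^ (s + 1) * (1 - Q ^ (m + 1)) := by
    rw [show s + 1 + m + 1 = (s + 1) + (m + 1) by omega, pow_add]
    ring
  have hPm : P Q (m + 1) ≠ 0 := P_ne_zero hQ (m + 1)
  have hPm' : ((1 : ℂ) - Q ^ (m + 1)) ≠ 0 := hQ m
  have hD : P Q m ≠ 0 := P_ne_zero hQ m
  rw [hA, hB, hfac]
  rw [← mul_div_assoc,
      div_add_div _ _ (mul_ne_zero hD hPm') hD,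
      div_eq_div_iff (mul_ne_zero hD hPm') (mul_ne_zero (mul_ne_zero hD hPm') hD)]
  ring

/-- Gauss's q-binomial theorem. -/
lemma gauss (hQ : ∀ j : ℕ, (1 : ℂ) - Q ^ (j + 1) ≠ 0) (t : ℂ) (n : ℕ) :
    (∏ j ∈ range n, (1 + t * Q ^ j)) =
      ∑ m ∈ range (n + 1), Q ^ (m.choose 2) * gb Q n m * t ^ m := by
  induction n with
  | zero => simp [gb_zero]
  | succ n ih =>
    rw [prod_range_succ, ih]
    have pascal : ∀ m : ℕ, m ≤ n →
        gb Q (n + 1) (m + 1) = gb Q n (m + 1) + Q ^ (n - m) * gb Q n m := by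
      intro m hm
      obtain ⟨r, rfl⟩ := Nat.exists_eq_add_of_le hm
      rw [show m + r - m = r by omega]
      exact gb_pascal hQ m r
    set S := ∑ m ∈ range (n + 1), Q ^ (m.choose 2) * gb Q n m * t ^ m with hS
    have h1 : ∑ m ∈ range (n + 1 + 1), Q ^ (m.choose 2) * gb Q (n + 1) m * t ^ m
        = (∑ m ∈ range (n + 1), Q ^ ((m + 1).choose 2) * gb Q (n + 1) (m + 1) * t ^ (m + 1)) + 1 := by
      rw [Finset.sum_range_succ' (fun m => Q ^ (m.choose 2) * gb Q (n + 1) m * t ^ m) (n + 1)]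
      simp [gb_zero]
    have hsum : ∀ m ∈ range (n + 1),
        Q ^ ((m + 1).choose 2) * gb Q (n + 1) (m + 1) * t ^ (m + 1)
        = Q ^ ((m + 1).choose 2) * gb Q n (m + 1) * t ^ (m + 1)
          + (t * Q ^ n) * (Q ^ (m.choose 2) * gb Q n m * t ^ m) := by
      intro m hm
      have hmn : m ≤ n := Nat.lt_succ_iff.1 (mem_range.1 hm)
      rw [pascal m hmn]
      have hch : (m + 1).choose 2 = m.choose 2 + m := by
        rw [Nat.choose_two_right, Nat.choose_two_right]
        simp only [Nat.add_sub_cancel]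
        have h2 : 2 ∣ m * (m - 1) := by
          cases m with
          | zero => simp
          | succ k => simpa [Nat.succ_sub_one, Nat.mul_comm] using (Nat.even_mul_succ_self k).two_dvd
        have h2' : 2 ∣ (m + 1) * m := by
          rw [Nat.mul_comm]; exact (Nat.even_mul_succ_self m).two_dvd
        have hmul : (m + 1) * m = m * (m - 1) + 2 * m := by
          cases m with
          | zero => rfl
          | succ k => simp only [Nat.succ_sub_one]; ring
        omega
      have hexp : Q ^ ((m + 1).choose 2) * Q ^ (n - m) = Q ^ n * Q ^ (m.choose 2) := by
        rw [← pow_add, ← pow_add, hch]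
        congr 1
        omega
      calc Q ^ ((m + 1).choose 2) * (gb Q n (m + 1) + Q ^ (n - m) * gb Q n m) * t ^ (m + 1)
          = Q ^ ((m + 1).choose 2) * gb Q n (m + 1) * t ^ (m + 1)
            + (Q ^ ((m + 1).choose 2) * Q ^ (n - m)) * gb Q n m * t ^ (m + 1) := by ring
        _ = _ := by rw [hexp, pow_succ]; ring
    have h2 : ∑ m ∈ range (n + 1), Q ^ ((m + 1).choose 2) * gb Q (n + 1) (m + 1) * t ^ (m + 1)
        = (∑ m ∈ range (n + 1), Q ^ ((m + 1).choose 2) * gb Q n (m + 1) * t ^ (m + 1))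
          + t * Q ^ n * S := by
      rw [Finset.sum_congr rfl hsum, Finset.sum_add_distrib, ← Finset.mul_sum]
    have h3 : (∑ m ∈ range (n + 1), Q ^ ((m + 1).choose 2) * gb Q n (m + 1) * t ^ (m + 1)) + 1
        = S := by
      have ha := Finset.sum_range_succ' (fun m => Q ^ (m.choose 2) * gb Q n m * t ^ m) (n + 1)
      have hb := Finset.sum_range_succ (fun m => Q ^ (m.choose 2) * gb Q n m * t ^ m) (n + 1)
      simp only [gb_zero, pow_zero, mul_one, one_mul, Nat.choose_zero_right,
        Nat.choose_self, Nat.zero_sub, Nat.choose_eq_zero_of_lt (show 0 < 2 by omega),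
        gb_of_gt (show n < n + 1 by omega), mul_zero, zero_mul, add_zero] at ha hb
      rw [← hS] at hb
      rw [← hb, ha]
    rw [h1, h2]
    rw [add_right_comm, h3]
    ring

lemma sum_odd_sq (N : ℕ) : ∑ j ∈ range N, (2 * j + 1) = N ^ 2 := by
  induction N with
  | zero => rfl
  | succ n ih => rw [sum_range_succ, ih]; ring

lemma choose_two_arith (m : ℕ) : 2 * m.choose 2 + m = m * m := by
  rw [Nat.choose_two_right]
  have h2 : 2 ∣ m * (m - 1) := by
    cases m with
    | zero => simp
    | succ k => simpa [Nat.succ_sub_one, Nat.mul_comm] using (Nat.even_mul_succ_self k).two_dvd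
  have hmul : m * m = m * (m - 1) + m := by
    cases m with
    | zero => rfl
    | succ k => simp only [Nat.succ_sub_one]; ring
  omega

lemma term_eq' (q z : ℂ) (hq : q ≠ 0) (hz : z ≠ 0) (N m : ℕ) :
    ((q ^ 2) ^ (m.choose 2) : ℂ) * (-z * q / q ^ (2 * N)) ^ m
      = ((-z) ^ N / q ^ (N ^ 2)) *
        ((-1 : ℂ) ^ ((m : ℤ) - (N : ℤ)) * q ^ (((m : ℤ) - (N : ℤ)) ^ 2) * z ^ ((m : ℤ) - (N : ℤ))) := by
  have hm1 : (-1 : ℂ) ≠ 0 := by norm_num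
  have hLHS : ((q ^ 2) ^ (m.choose 2) : ℂ) * (-z * q / q ^ (2 * N)) ^ m
      = (-1 : ℂ) ^ (m : ℤ) * z ^ (m : ℤ) * q ^ ((m : ℤ) * m - 2 * N * m) := by
    have e0 : (-z * q / q ^ (2 * N)) = (-1) * z * q * (q ^ (2 * N))⁻¹ := by ring
    rw [e0, mul_pow, mul_pow, mul_pow, inv_pow, ← pow_mul, ← pow_mul]
    have e1 : q ^ (2 * m.choose 2) * ((-1 : ℂ) ^ m * z ^ m * q ^ m * (q ^ (2 * N * m))⁻¹)
        = (-1 : ℂ) ^ m * z ^ m * (q ^ (m * m) * (q ^ (2 * N * m))⁻¹) := by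
      rw [show (m * m) = 2 * m.choose 2 + m from (choose_two_arith m).symm, pow_add]
      ring
    rw [e1, ← zpow_natCast q (m * m), ← zpow_natCast q (2 * N * m), ← zpow_neg, ← zpow_add₀ hq,
        ← zpow_natCast (-1 : ℂ) m, ← zpow_natCast z m]
    congr 1
    all_goals push_cast
    all_goals try ring
  have hRHS : ((-z) ^ N / q ^ (N ^ 2)) *
        ((-1 : ℂ) ^ ((m : ℤ) - (N : ℤ)) * q ^ (((m : ℤ) - (N : ℤ)) ^ 2) * z ^ ((m : ℤ) - (N : ℤ)))
      = (-1 : ℂ) ^ (m : ℤ) * z ^ (m : ℤ) * q ^ ((m : ℤ) * m - 2 * N * m) := by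
    rw [neg_pow, div_eq_mul_inv, ← zpow_natCast q (N ^ 2), ← zpow_neg,
        ← zpow_natCast (-1 : ℂ) N, ← zpow_natCast z N]
    have hone : (-1 : ℂ) ^ ((N : ℤ)) * (-1 : ℂ) ^ ((m : ℤ) - (N : ℤ)) = (-1 : ℂ) ^ (m : ℤ) := by
      rw [← zpow_add₀ hm1]; congr 1; ring
    have hzz : z ^ ((N : ℤ)) * z ^ ((m : ℤ) - (N : ℤ)) = z ^ (m : ℤ) := by
      rw [← zpow_add₀ hz]; congr 1; ring
    have hqq : q ^ (-((N ^ 2 : ℕ) : ℤ)) * q ^ (((m : ℤ) - (N : ℤ)) ^ 2)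
        = q ^ ((m : ℤ) * m - 2 * N * m) := by
      rw [← zpow_add₀ hq]; congr 1; push_cast; ring
    calc ((-1 : ℂ) ^ ((N : ℤ)) * z ^ ((N : ℤ)) * (q ^ (-((N ^ 2 : ℕ) : ℤ)))) *
          ((-1 : ℂ) ^ ((m : ℤ) - (N : ℤ)) * q ^ (((m : ℤ) - (N : ℤ)) ^ 2) * z ^ ((m : ℤ) - (N : ℤ)))
        = ((-1 : ℂ) ^ ((N : ℤ)) * (-1 : ℂ) ^ ((m : ℤ) - (N : ℤ))) * (z ^ ((N : ℤ)) * z ^ ((m : ℤ) - (N : ℤ)))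
          * (q ^ (-((N ^ 2 : ℕ) : ℤ)) * q ^ (((m : ℤ) - (N : ℤ)) ^ 2)) := by ring
      _ = _ := by rw [hone, hzz, hqq]
  rw [hLHS, hRHS]

/-- The finite Jacobi triple product identity. -/
lemma tfi (q z : ℂ) (hq : q ≠ 0) (hz : z ≠ 0)
    (hQ : ∀ j : ℕ, (1 : ℂ) - (q ^ 2) ^ (j + 1) ≠ 0) (N : ℕ) :
    ∏ i ∈ range N, ((1 - q ^ (2 * i + 1) * z) * (1 - q ^ (2 * i + 1) * z⁻¹)) =
      ∑ m ∈ range (2 * N + 1),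
        (-1 : ℂ) ^ ((m : ℤ) - (N : ℤ)) * gb (q ^ 2) (2 * N) m *
          q ^ (((m : ℤ) - (N : ℤ)) ^ 2) * z ^ ((m : ℤ) - (N : ℤ)) := by
  have hc : ((-z) ^ N / q ^ (N ^ 2) : ℂ) ≠ 0 :=
    div_ne_zero (pow_ne_zero _ (neg_ne_zero.2 hz)) (pow_ne_zero _ hq)
  apply mul_left_cancel₀ hc
  have G := gauss hQ (-z * q / q ^ (2 * N)) (2 * N)
  -- compute the product side of Gauss
  have hGL : (∏ j ∈ range (2 * N), (1 + (-z * q / q ^ (2 * N)) * (q ^ 2) ^ j))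
      = ((-z) ^ N / q ^ (N ^ 2)) *
        ∏ i ∈ range N, ((1 - q ^ (2 * i + 1) * z) * (1 - q ^ (2 * i + 1) * z⁻¹)) := by
    have hfac : ∀ j : ℕ, (1 + (-z * q / q ^ (2 * N)) * (q ^ 2) ^ j)
        = 1 - z * q ^ (2 * j + 1) / q ^ (2 * N) := by
      intro j
      rw [← pow_mul, show 2 * j + 1 = j * 2 + 1 by ring, pow_succ']
      ring
    simp only [hfac]
    rw [show range (2 * N) = range (N + N) by rw [two_mul], prod_range_add]
    have hsecond : ∀ j : ℕ, (1 - z * q ^ (2 * (N + j) + 1) / q ^ (2 * N))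
        = 1 - q ^ (2 * j + 1) * z := by
      intro j
      rw [show 2 * (N + j) + 1 = 2 * N + (2 * j + 1) by ring, pow_add]
      field_simp
    have hfirst : ∀ j : ℕ, j < N → (1 - z * q ^ (2 * j + 1) / q ^ (2 * N))
        = (-z * q ^ (2 * j + 1) / q ^ (2 * N)) * (1 - q ^ (2 * (N - 1 - j) + 1) * z⁻¹) := by
      intro j hj
      have he : 2 * (N - 1 - j) + 1 + (2 * j + 1) = 2 * N := by omega
      have hq2 : q ^ (2 * (N - 1 - j) + 1) = q ^ (2 * N) / q ^ (2 * j + 1) := by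
        rw [eq_div_iff (pow_ne_zero _ hq), ← pow_add, he]
      rw [hq2]
      have hqN : (q : ℂ) ^ (2 * N) ≠ 0 := pow_ne_zero _ hq
      have hqj : (q : ℂ) ^ (2 * j + 1) ≠ 0 := pow_ne_zero _ hq
      field_simp
      ring
    rw [Finset.prod_congr rfl (fun j hj => hfirst j (mem_range.1 hj)),
        Finset.prod_congr rfl (fun j _ => hsecond j), Finset.prod_mul_distrib]
    have hrefl : (∏ j ∈ range N, (1 - q ^ (2 * (N - 1 - j) + 1) * z⁻¹))
        = ∏ i ∈ range N, (1 - q ^ (2 * i + 1) * z⁻¹) := by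
      exact Finset.prod_range_reflect (fun i => 1 - q ^ (2 * i + 1) * z⁻¹) N
    rw [hrefl]
    have hscal : (∏ j ∈ range N, (-z * q ^ (2 * j + 1) / q ^ (2 * N)))
        = (-z) ^ N / q ^ (N ^ 2) := by
      have : ∀ j : ℕ, (-z * q ^ (2 * j + 1) / q ^ (2 * N) : ℂ)
          = (-z) * (q ^ (2 * j + 1) / q ^ (2 * N)) := by intro j; ring
      simp only [this]
      rw [Finset.prod_mul_distrib, Finset.prod_const, Finset.card_range,
          Finset.prod_div_distrib, Finset.prod_const, Finset.card_range,
          Finset.prod_pow_eq_pow_sum, sum_odd_sq, ← pow_mul]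
      have h2N : (q ^ (2 * N * N) : ℂ) = q ^ (N ^ 2) * q ^ (N ^ 2) := by
        rw [← pow_add]; congr 1; ring
      rw [h2N]
      have hqN2 : (q : ℂ) ^ (N ^ 2) ≠ 0 := pow_ne_zero _ hq
      field_simp
    rw [hscal, Finset.prod_mul_distrib]
    ring
  rw [hGL] at G
  rw [G, Finset.mul_sum]
  apply Finset.sum_congr rfl
  intro m _
  rw [show ((q ^ 2) ^ (m.choose 2) : ℂ) * gb (q ^ 2) (2 * N) m * (-z * q / q ^ (2 * N)) ^ m
      = ((q ^ 2) ^ (m.choose 2) * (-z * q / q ^ (2 * N)) ^ m) * gb (q ^ 2) (2 * N) m by ring,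
    term_eq' q z hq hz N m]
  ring

variable {Q : ℂ}

lemma P_add (n m : ℕ) : P Q (n + m) = P Q n * ∏ j ∈ range m, (1 - Q ^ (n + j + 1)) := by
  simpa [P] using prod_range_add (fun j => (1 : ℂ) - Q ^ (j + 1)) n m

lemma coeff_hi (hQ : ∀ j : ℕ, (1 : ℂ) - Q ^ (j + 1) ≠ 0) (a s : ℕ) :
    P Q (a + s) * gb Q (2 * (a + s)) ((a + s) + a)
      = (∏ j ∈ range a, (1 - Q ^ (s + j + 1))) *
        ∏ j ∈ range s, (1 - Q ^ ((a + s) + a + j + 1)) := by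
  have hm : (a + s) + a ≤ 2 * (a + s) := by omega
  rw [gb, if_pos hm, show 2 * (a + s) - ((a + s) + a) = s by omega]
  have hnum : (∏ j ∈ range ((a + s) + a), (1 - Q ^ (s + j + 1)))
      = (∏ j ∈ range a, (1 - Q ^ (s + j + 1))) *
        ((∏ j ∈ range a, (1 - Q ^ ((a + s) + j + 1))) *
          ∏ j ∈ range s, (1 - Q ^ ((a + s) + a + j + 1))) := by
    rw [congrArg range (show (a + s) + a = a + (a + s) by omega), prod_range_add]
    congr 1
    have e1 : ∀ x : ℕ, s + (a + x) + 1 = (a + s) + x + 1 := by omega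
    simp only [e1]
    rw [prod_range_add]
    congr 1
    have e2 : ∀ x : ℕ, (a + s) + (a + x) + 1 = (a + s) + a + x + 1 := by omega
    simp only [e2]
  rw [hnum, P_add (a + s) a]
  have hW : (∏ j ∈ range a, ((1 : ℂ) - Q ^ ((a + s) + j + 1))) ≠ 0 :=
    Finset.prod_ne_zero_iff.2 fun j _ => hQ ((a + s) + j)
  have hP : P Q (a + s) ≠ 0 := P_ne_zero hQ _
  field_simp

lemma coeff_lo (hQ : ∀ j : ℕ, (1 : ℂ) - Q ^ (j + 1) ≠ 0) (a s : ℕ) :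
    P Q (a + s) * gb Q (2 * (a + s)) s
      = (∏ j ∈ range a, (1 - Q ^ (s + j + 1))) *
        ∏ j ∈ range s, (1 - Q ^ ((a + s) + a + j + 1)) := by
  have hm : s ≤ 2 * (a + s) := by omega
  rw [gb, if_pos hm, show 2 * (a + s) - s = (a + s) + a by omega]
  rw [congrArg (P Q) (show a + s = s + a by omega), P_add s a]
  have hPs : P Q s ≠ 0 := P_ne_zero hQ _
  have e1 : ∀ x : ℕ, (a + s) + a + x + 1 = (a + s) + a + x + 1 := fun _ => rfl
  field_simp

lemma coeff_eq (hQ : ∀ j : ℕ, (1 : ℂ) - Q ^ (j + 1) ≠ 0) (k : ℤ) {a s : ℕ}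
    (ha : k.natAbs = a) (N : ℕ) (hN : N = a + s) :
    P Q N * gb Q (2 * N) (((N : ℤ) + k).toNat)
      = (∏ j ∈ range a, (1 - Q ^ (s + j + 1))) *
        ∏ j ∈ range s, (1 - Q ^ (N + a + j + 1)) := by
  subst hN
  rcases le_or_gt 0 k with hk | hk
  · have hm : (((a + s : ℕ) : ℤ) + k).toNat = (a + s) + a := by omega
    rw [hm, coeff_hi hQ a s]
  · have hm : (((a + s : ℕ) : ℤ) + k).toNat = s := by omega
    rw [hm, coeff_lo hQ a s]

/-- `‖∏ (1 - f i) - 1‖ ≤ ∏ (1 + ‖f i‖) - 1`. -/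
lemma norm_prod_sub_one {ι : Type*} (t : Finset ι) (f : ι → ℂ) :
    ‖(∏ i ∈ t, (1 - f i)) - 1‖ ≤ (∏ i ∈ t, (1 + ‖f i‖)) - 1 := by
  induction t using Finset.cons_induction with
  | empty => simp
  | cons b t hb ih =>
    rw [Finset.prod_cons, Finset.prod_cons]
    have hP1 : (1 : ℝ) ≤ ∏ i ∈ t, (1 + ‖f i‖) := by
      have := Finset.prod_le_prod (s := t) (f := fun _ => (1 : ℝ))
        (g := fun i => 1 + ‖f i‖) (fun i _ => zero_le_one)
        (fun i _ => by linarith [norm_nonneg (f i)])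
      simpa using this
    have hX : ‖∏ i ∈ t, (1 - f i)‖ ≤ ∏ i ∈ t, (1 + ‖f i‖) := by
      calc ‖∏ i ∈ t, (1 - f i)‖ ≤ ‖(∏ i ∈ t, (1 - f i)) - 1‖ + ‖(1 : ℂ)‖ := by
            simpa using norm_add_le ((∏ i ∈ t, (1 - f i)) - 1) 1
        _ ≤ (∏ i ∈ t, (1 + ‖f i‖)) - 1 + 1 := by simp only [norm_one]; linarith [ih]
        _ = _ := by ring
    calc ‖(1 - f b) * ∏ i ∈ t, (1 - f i) - 1‖
        = ‖((∏ i ∈ t, (1 - f i)) - 1) + (-f b) * ∏ i ∈ t, (1 - f i)‖ := by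
          congr 1; ring
      _ ≤ ‖(∏ i ∈ t, (1 - f i)) - 1‖ + ‖f b‖ * ‖∏ i ∈ t, (1 - f i)‖ := by
          refine (norm_add_le _ _).trans ?_
          rw [norm_mul, norm_neg]
      _ ≤ ((∏ i ∈ t, (1 + ‖f i‖)) - 1) + ‖f b‖ * ∏ i ∈ t, (1 + ‖f i‖) := by
          have := mul_le_mul_of_nonneg_left hX (norm_nonneg (f b))
          linarith [ih]
      _ = (1 + ‖f b‖) * ∏ i ∈ t, (1 + ‖f i‖) - 1 := by ring

lemma prod_one_add_le_exp {ι : Type*} (t : Finset ι) (g : ι → ℝ) (hg : ∀ i, 0 ≤ g i) :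
    (∏ i ∈ t, (1 + g i)) ≤ Real.exp (∑ i ∈ t, g i) := by
  rw [Real.exp_sum]
  exact Finset.prod_le_prod (fun i _ => by linarith [hg i])
    (fun i _ => by linarith [Real.add_one_le_exp (g i)])

lemma sum_pow_le {r : ℝ} (h0 : 0 ≤ r) (h1 : r < 1) (c n : ℕ) :
    ∑ j ∈ range n, r ^ (c + j + 1) ≤ r ^ (c + 1) / (1 - r) := by
  have e : ∀ j : ℕ, r ^ (c + j + 1) = r ^ (c + 1) * r ^ j := by
    intro j; rw [← pow_add]; congr 1; omega
  simp only [e]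
  rw [← Finset.mul_sum, div_eq_mul_inv]
  refine mul_le_mul_of_nonneg_left ?_ (by positivity)
  calc ∑ i ∈ range n, r ^ i
      ≤ ∑' i : ℕ, r ^ i :=
        Summable.sum_le_tsum (range n) (fun i _ => pow_nonneg h0 i)
          (summable_geometric_of_lt_one h0 h1)
    _ = (1 - r)⁻¹ := tsum_geometric_of_lt_one h0 h1

lemma coeff_est {Q : ℂ} (hr1 : ‖Q‖ < 1) (a s N : ℕ) (hN : N = a + s) :
    ‖(∏ j ∈ range a, ((1 : ℂ) - Q ^ (s + j + 1))) *
        (∏ j ∈ range s, ((1 : ℂ) - Q ^ (N + a + j + 1))) - 1‖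
      ≤ Real.exp (2 * ‖Q‖ ^ (s + 1) / (1 - ‖Q‖)) - 1 := by
  have hr0 : (0 : ℝ) ≤ ‖Q‖ := norm_nonneg _
  have hr1' : (0 : ℝ) < 1 - ‖Q‖ := by linarith
  set r := ‖Q‖ with hr
  set u := r ^ (s + 1) / (1 - r) with hu
  have hu0 : 0 ≤ u := by positivity
  set EU := Real.exp u with hEU
  have hEU1 : (1 : ℝ) ≤ EU := Real.one_le_exp hu0
  set X := ∏ j ∈ range a, ((1 : ℂ) - Q ^ (s + j + 1)) with hX
  set Y := ∏ j ∈ range s, ((1 : ℂ) - Q ^ (N + a + j + 1)) with hY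
  have hXbound : ‖X - 1‖ ≤ EU - 1 := by
    have h1 := norm_prod_sub_one (range a) (fun j => Q ^ (s + j + 1))
    simp only [norm_pow] at h1
    have h2 := prod_one_add_le_exp (range a) (fun j => r ^ (s + j + 1))
      (fun j => by positivity)
    have h3 : ∑ j ∈ range a, r ^ (s + j + 1) ≤ u := sum_pow_le hr0 hr1 s a
    have h4 : Real.exp (∑ j ∈ range a, r ^ (s + j + 1)) ≤ EU := Real.exp_le_exp.2 h3
    linarith
  have hYbound : ‖Y - 1‖ ≤ EU - 1 := by
    have h1 := norm_prod_sub_one (range s) (fun j => Q ^ (N + a + j + 1))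
    simp only [norm_pow] at h1
    have h2 := prod_one_add_le_exp (range s) (fun j => r ^ (N + a + j + 1))
      (fun j => by positivity)
    have h3 : ∑ j ∈ range s, r ^ (N + a + j + 1) ≤ r ^ (N + a + 1) / (1 - r) :=
      sum_pow_le hr0 hr1 (N + a) s
    have h5 : r ^ (N + a + 1) ≤ r ^ (s + 1) :=
      pow_le_pow_of_le_one hr0 hr1.le (by omega)
    have h6 : r ^ (N + a + 1) / (1 - r) ≤ u := by
      rw [hu]; exact div_le_div_of_nonneg_right h5 hr1'.le
    have h4 : Real.exp (∑ j ∈ range s, r ^ (N + a + j + 1)) ≤ EU :=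
      Real.exp_le_exp.2 (h3.trans h6)
    linarith
  have hYnorm : ‖Y‖ ≤ EU := by
    calc ‖Y‖ ≤ ‖Y - 1‖ + ‖(1 : ℂ)‖ := by simpa using norm_add_le (Y - 1) 1
      _ ≤ EU := by simp only [norm_one]; linarith
  calc ‖X * Y - 1‖ = ‖(X - 1) * Y + (Y - 1)‖ := by congr 1; ring
    _ ≤ ‖(X - 1) * Y‖ + ‖Y - 1‖ := norm_add_le _ _
    _ ≤ (EU - 1) * EU + (EU - 1) := by
        rw [norm_mul]
        have hm := mul_le_mul hXbound hYnorm (norm_nonneg Y) (by linarith)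
        linarith
    _ = Real.exp (2 * r ^ (s + 1) / (1 - r)) - 1 := by
        rw [show (2 : ℝ) * r ^ (s + 1) / (1 - r) = u + u by rw [hu]; ring, Real.exp_add]
        rw [← hEU]
        ring

lemma aux_summable {x w C : ℝ} (hx0 : 0 ≤ x) (hx1 : x < 1) (hw : 0 ≤ w) (hC : 0 ≤ C) :
    Summable (fun n : ℕ => C * x ^ (n * n) * w ^ n) := by
  obtain ⟨n₀, hn₀⟩ : ∃ n₀ : ℕ, x ^ n₀ * w ≤ 1 / 2 := by
    have h := (tendsto_pow_atTop_nhds_zero_of_lt_one hx0 hx1).mul_const w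
    rw [zero_mul] at h
    exact (h.eventually (eventually_le_nhds (by norm_num : (0 : ℝ) < 1 / 2))).exists
  rw [← summable_nat_add_iff n₀]
  refine Summable.of_nonneg_of_le (fun n => by positivity) (fun n => ?_)
    (((summable_geometric_of_lt_one (by norm_num) (by norm_num : (1 : ℝ) / 2 < 1)).mul_left C))
  have h1 : x ^ ((n + n₀) * (n + n₀)) * w ^ (n + n₀) = (x ^ (n + n₀) * w) ^ (n + n₀) := by
    rw [mul_pow, ← pow_mul]
  have h2 : x ^ (n + n₀) * w ≤ 1 / 2 :=
    (mul_le_mul_of_nonneg_right (pow_le_pow_of_le_one hx0 hx1.le (by omega)) hw).trans hn₀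
  have h3 : (x ^ (n + n₀) * w) ^ (n + n₀) ≤ (1 / 2 : ℝ) ^ (n + n₀) :=
    pow_le_pow_left₀ (by positivity) h2 _
  have h4 : ((1 : ℝ) / 2) ^ (n + n₀) ≤ (1 / 2 : ℝ) ^ n :=
    pow_le_pow_of_le_one (by norm_num) (by norm_num) (by omega)
  calc C * x ^ ((n + n₀) * (n + n₀)) * w ^ (n + n₀)
      = C * (x ^ (n + n₀) * w) ^ (n + n₀) := by rw [mul_assoc, h1]
    _ ≤ C * (1 / 2 : ℝ) ^ n := mul_le_mul_of_nonneg_left (h3.trans h4) hC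

lemma multipliable_one_sub (v : ℕ → ℂ) (hs : Summable fun n => ‖v n‖)
    (hnz : ∀ n, (1 : ℂ) - v n ≠ 0) : Multipliable fun n => 1 - v n := by
  have h := Complex.multipliable_one_add_of_summable (hs.of_norm.neg)
  simpa only [sub_eq_add_neg] using h

end JTP

open Finset Filter JTP

/-- Jacobi's triple product identity: for `0 < ‖q‖ < 1` and `z ≠ 0`,
`∑_{n∈ℤ} (-1)^n q^(n²) z^n = ∏_{n>0} (1-q^(2n))(1-q^(2n-1)z)(1-q^(2n-1)z⁻¹)`. -/
theorem jacobi_triple_product (q z : ℂ) (hq0 : 0 < ‖q‖) (hq : ‖q‖ < 1) (hz : z ≠ 0) :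
    ∑' n : ℤ, (-1 : ℂ) ^ n * q ^ (n ^ 2) * z ^ n =
    ∏' n : ℕ, ((1 - q ^ (2 * (n + 1))) * (1 - q ^ (2 * (n + 1) - 1) * z) *
      (1 - q ^ (2 * (n + 1) - 1) * z⁻¹)) := by
  classical
  have hqne : q ≠ 0 := by
    intro h; rw [h, norm_zero] at hq0; exact lt_irrefl _ hq0
  set Q : ℂ := q ^ 2 with hQdef
  have hrQ : ‖Q‖ < 1 := by
    rw [hQdef, norm_pow]
    exact pow_lt_one₀ (norm_nonneg q) hq (by norm_num)
  have hQj : ∀ j : ℕ, (1 : ℂ) - Q ^ (j + 1) ≠ 0 := by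
    intro j h
    have h1 : Q ^ (j + 1) = 1 := by linear_combination -h
    have h2 : ‖Q ^ (j + 1)‖ < 1 := by
      rw [norm_pow]
      exact pow_lt_one₀ (norm_nonneg Q) hrQ (by omega)
    rw [h1, norm_one] at h2
    exact lt_irrefl _ h2
  set u : ℕ → ℂ := fun n => (1 - q ^ (2 * (n + 1))) * (1 - q ^ (2 * (n + 1) - 1) * z) *
      (1 - q ^ (2 * (n + 1) - 1) * z⁻¹) with hu
  set T : ℤ → ℂ := fun k => (-1 : ℂ) ^ k * q ^ (k ^ 2) * z ^ k with hT
  set b : ℕ → ℤ → ℂ := fun N k => P Q N * gb Q (2 * N) (((N : ℤ) + k).toNat) with hbdef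
  set f : ℕ → ℤ → ℂ := fun N k => if k.natAbs ≤ N then b N k * T k else 0 with hfdef
  set r : ℝ := ‖Q‖ with hrdef
  have hr0 : (0 : ℝ) ≤ r := norm_nonneg _
  have hr1' : (0 : ℝ) < 1 - r := by linarith
  set C : ℝ := Real.exp (2 / (1 - r)) with hCdef
  have hC0 : 0 ≤ C := (Real.exp_pos _).le
  set w : ℝ := max ‖z‖ ‖z⁻¹‖ with hwdef
  have hw0 : 0 ≤ w := le_trans (norm_nonneg z) (le_max_left _ _)
  -- uniform coefficient bound
  have hbnorm : ∀ (N : ℕ) (k : ℤ), k.natAbs ≤ N → ‖b N k‖ ≤ C := by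
    intro N k hk
    have hco := coeff_eq hQj k rfl N (show N = k.natAbs + (N - k.natAbs) by omega)
    rw [hbdef]
    dsimp only
    rw [hco]
    set Y := (∏ j ∈ range k.natAbs, ((1:ℂ) - Q ^ ((N - k.natAbs) + j + 1))) *
      ∏ j ∈ range (N - k.natAbs), ((1:ℂ) - Q ^ (N + k.natAbs + j + 1)) with hYdef
    have hest : ‖Y - 1‖ ≤ Real.exp (2 * r ^ ((N - k.natAbs) + 1) / (1 - r)) - 1 :=
      coeff_est hrQ k.natAbs (N - k.natAbs) N (by omega)
    have hle : Real.exp (2 * r ^ ((N - k.natAbs) + 1) / (1 - r)) ≤ C := by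
      rw [hCdef]
      apply Real.exp_le_exp.2
      apply div_le_div_of_nonneg_right ?_ hr1'.le
      have := pow_le_one₀ hr0 hrQ.le (n := (N - k.natAbs) + 1)
      linarith
    calc ‖Y‖ ≤ ‖Y - 1‖ + ‖(1 : ℂ)‖ := by simpa using norm_add_le (Y - 1) 1
      _ ≤ C := by rw [norm_one]; linarith
  -- norm bound for T
  have hTnorm : ∀ k : ℤ, ‖T k‖ ≤ ‖q‖ ^ (k.natAbs * k.natAbs) * w ^ k.natAbs := by
    intro k
    have hzk : ‖z ^ k‖ ≤ w ^ k.natAbs := by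
      rcases Int.natAbs_eq k with he | he
      · conv_lhs => rw [he]
        rw [zpow_natCast, norm_pow]
        exact pow_le_pow_left₀ (norm_nonneg z) (le_max_left _ _) _
      · conv_lhs => rw [he]
        rw [zpow_neg, zpow_natCast, norm_inv, norm_pow, ← inv_pow, ← norm_inv z]
        exact pow_le_pow_left₀ (norm_nonneg _) (le_max_right _ _) _
    have hq2 : ‖q ^ (k ^ 2)‖ = ‖q‖ ^ (k.natAbs * k.natAbs) := by
      rw [norm_zpow]
      have h1 : k ^ 2 = ((k.natAbs * k.natAbs : ℕ) : ℤ) := by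
        rw [pow_two]; exact_mod_cast Int.natAbs_mul_self.symm
      rw [h1, zpow_natCast]
    rw [hT]
    dsimp only
    rw [norm_mul, norm_mul, norm_zpow, norm_neg, norm_one, one_zpow, one_mul, hq2]
    exact mul_le_mul_of_nonneg_left hzk (by positivity)
  -- dominating function
  set g : ℤ → ℝ := fun k => C * ‖q‖ ^ (k.natAbs * k.natAbs) * w ^ k.natAbs with hgdef
  have hgsum : Summable g := by
    apply Summable.of_nat_of_neg
    · apply Summable.congr (aux_summable (norm_nonneg q) hq hw0 hC0)
      intro n; simp [hgdef]
    · apply Summable.congr (aux_summable (norm_nonneg q) hq hw0 hC0)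
      intro n; simp [hgdef]
  -- the bound on f
  have hbound : ∀ (N : ℕ) (k : ℤ), ‖f N k‖ ≤ g k := by
    intro N k
    rw [hfdef]
    dsimp only
    split_ifs with hk
    · rw [norm_mul, hgdef]
      dsimp only
      rw [mul_assoc]
      exact mul_le_mul (hbnorm N k hk) (hTnorm k) (norm_nonneg _) hC0
    · rw [norm_zero, hgdef]
      dsimp only
      positivity
  -- pointwise convergence
  have hbtend : ∀ k : ℤ, Tendsto (fun N => b N k) atTop (𝓝 1) := by
    intro k
    rw [tendsto_iff_norm_sub_tendsto_zero]
    apply squeeze_zero' (Eventually.of_forall fun N => norm_nonneg _)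
      (g := fun N => Real.exp (2 * r ^ ((N - k.natAbs) + 1) / (1 - r)) - 1)
    · filter_upwards [eventually_ge_atTop k.natAbs] with N hN
      have hco := coeff_eq hQj k rfl N (show N = k.natAbs + (N - k.natAbs) by omega)
      rw [hbdef]
      dsimp only
      rw [hco]
      exact coeff_est hrQ k.natAbs (N - k.natAbs) N (by omega)
    · have h1 : Tendsto (fun N : ℕ => N - k.natAbs + 1) atTop atTop :=
        tendsto_atTop_atTop.2 (fun m => ⟨m + k.natAbs, fun n hn => by omega⟩)
      have h2 : Tendsto (fun N : ℕ => r ^ (N - k.natAbs + 1)) atTop (𝓝 0) :=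
        (tendsto_pow_atTop_nhds_zero_of_lt_one hr0 hrQ).comp h1
      have h3 := (h2.const_mul (2 : ℝ)).div_const (1 - r)
      rw [mul_zero, zero_div] at h3
      have h4 := (Real.continuous_exp.tendsto 0).comp h3
      rw [Real.exp_zero] at h4
      have h5 := h4.sub_const 1
      rw [sub_self] at h5
      exact h5
  have hpoint : ∀ k : ℤ, Tendsto (fun N => f N k) atTop (𝓝 (T k)) := by
    intro k
    have h1 := (hbtend k).mul_const (T k)
    rw [one_mul] at h1
    apply h1.congr'
    filter_upwards [eventually_ge_atTop k.natAbs] with N hN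
    rw [hfdef]
    dsimp only
    rw [if_pos hN]
  -- Step 2 : dominated convergence
  have step2 : Tendsto (fun N => ∑' k : ℤ, f N k) atTop (𝓝 (∑' k : ℤ, T k)) :=
    tendsto_tsum_of_dominated_convergence hgsum hpoint (Eventually.of_forall hbound)
  -- Step 1 : identification of ∑' f N with partial products
  have step1 : ∀ N : ℕ, (∑' k : ℤ, f N k) = ∏ i ∈ range N, u i := by
    intro N
    have hvanish : ∀ k : ℤ, k ∉ Finset.Icc (-(N : ℤ)) (N : ℤ) → f N k = 0 := by
      intro k hk
      simp only [Finset.mem_Icc, not_and_or, not_le] at hk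
      rw [hfdef]
      dsimp only
      rw [if_neg (by omega)]
    rw [tsum_eq_sum hvanish]
    have hre : ∑ k ∈ Finset.Icc (-(N : ℤ)) (N : ℤ), f N k
        = ∑ m ∈ range (2 * N + 1), P Q N * (gb Q (2 * N) m *
            ((-1 : ℂ) ^ ((m : ℤ) - N) * q ^ (((m : ℤ) - N) ^ 2) * z ^ ((m : ℤ) - N))) := by
      apply Finset.sum_nbij' (i := fun k => ((N : ℤ) + k).toNat) (j := fun m => (m : ℤ) - N)
      · intro k hk
        simp only [Finset.mem_Icc] at hk
        simp only [Finset.mem_range]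
        omega
      · intro m hm
        simp only [Finset.mem_range] at hm
        simp only [Finset.mem_Icc]
        omega
      · intro k hk
        simp only [Finset.mem_Icc] at hk
        omega
      · intro m hm
        simp only [Finset.mem_range] at hm
        omega
      · intro k hk
        simp only [Finset.mem_Icc] at hk
        rw [hfdef]
        dsimp only
        rw [if_pos (by omega), hbdef]
        dsimp only
        have hcast : ((((N : ℤ) + k).toNat : ℕ) : ℤ) - (N : ℤ) = k := by omega
        rw [hcast, hT]
        dsimp only
        ring
    rw [hre, ← Finset.mul_sum]
    have htfi := tfi q z hqne hz hQj N
    have hre2 : (∑ m ∈ range (2 * N + 1), gb Q (2 * N) m *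
          ((-1 : ℂ) ^ ((m : ℤ) - N) * q ^ (((m : ℤ) - N) ^ 2) * z ^ ((m : ℤ) - N)))
        = ∑ m ∈ range (2 * N + 1), (-1 : ℂ) ^ ((m : ℤ) - (N : ℤ)) * gb (q ^ 2) (2 * N) m *
            q ^ (((m : ℤ) - (N : ℤ)) ^ 2) * z ^ ((m : ℤ) - (N : ℤ)) := by
      apply Finset.sum_congr rfl
      intro m _
      rw [← hQdef]
      ring
    rw [hre2, ← htfi]
    -- now : P Q N * ∏ (1 - q^(2i+1) z)(1 - q^(2i+1) z⁻¹) = ∏ u i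
    rw [hu]
    have hP : P Q N = ∏ i ∈ range N, ((1 : ℂ) - q ^ (2 * (i + 1))) := by
      rw [P]
      apply Finset.prod_congr rfl
      intro i _
      rw [hQdef, ← pow_mul]
    have hexp : ∀ i : ℕ, 2 * (i + 1) - 1 = 2 * i + 1 := fun i => by omega
    simp only [hexp]
    rw [hP, ← Finset.prod_mul_distrib]
    apply Finset.prod_congr rfl
    intro i _
    ring
  -- Step 3 : partial products converge to the infinite product
  have step3 : Tendsto (fun N => ∏ i ∈ range N, u i) atTop (𝓝 (∏' n, u n)) := by
    by_cases hex : ∀ n, u n ≠ 0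
    · have hgeom : Summable (fun n : ℕ => ‖q‖ ^ n * ‖z‖) :=
        (summable_geometric_of_lt_one (norm_nonneg q) hq).mul_right ‖z‖
      have hgeom' : Summable (fun n : ℕ => ‖q‖ ^ n * ‖z⁻¹‖) :=
        (summable_geometric_of_lt_one (norm_nonneg q) hq).mul_right ‖z⁻¹‖
      have hA : ∀ n : ℕ, (1 : ℂ) - q ^ (2 * (n + 1)) ≠ 0 := fun n h =>
        hex n (by rw [hu]; dsimp only; rw [h, zero_mul, zero_mul])
      have hB : ∀ n : ℕ, (1 : ℂ) - q ^ (2 * (n + 1) - 1) * z ≠ 0 := fun n h =>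
        hex n (by rw [hu]; dsimp only; rw [h, mul_zero, zero_mul])
      have hC' : ∀ n : ℕ, (1 : ℂ) - q ^ (2 * (n + 1) - 1) * z⁻¹ ≠ 0 := fun n h =>
        hex n (by rw [hu]; dsimp only; rw [h, mul_zero])
      have m1 : Multipliable (fun n : ℕ => (1 : ℂ) - q ^ (2 * (n + 1))) := by
        apply multipliable_one_sub _ ?_ hA
        apply Summable.of_nonneg_of_le (fun n => norm_nonneg _) ?_
          ((summable_geometric_of_lt_one (norm_nonneg q) hq))
        intro n
        rw [norm_pow]
        exact pow_le_pow_of_le_one (norm_nonneg q) hq.le (by omega)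
      have m2 : Multipliable (fun n : ℕ => (1 : ℂ) - q ^ (2 * (n + 1) - 1) * z) := by
        apply multipliable_one_sub _ ?_ hB
        apply Summable.of_nonneg_of_le (fun n => norm_nonneg _) ?_ hgeom
        intro n
        rw [norm_mul, norm_pow]
        exact mul_le_mul_of_nonneg_right
          (pow_le_pow_of_le_one (norm_nonneg q) hq.le (by omega)) (norm_nonneg z)
      have m3 : Multipliable (fun n : ℕ => (1 : ℂ) - q ^ (2 * (n + 1) - 1) * z⁻¹) := by
        apply multipliable_one_sub _ ?_ hC'
        apply Summable.of_nonneg_of_le (fun n => norm_nonneg _) ?_ hgeom'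
        intro n
        rw [norm_mul, norm_pow]
        exact mul_le_mul_of_nonneg_right
          (pow_le_pow_of_le_one (norm_nonneg q) hq.le (by omega)) (norm_nonneg z⁻¹)
      exact ((m1.mul m2).mul m3).hasProd.tendsto_prod_nat
    · push_neg at hex
      obtain ⟨n0, hn0⟩ := hex
      have hzero : HasProd u 0 := by
        rw [HasProd]
        apply tendsto_const_nhds.congr'
        filter_upwards [eventually_ge_atTop ({n0} : Finset ℕ)] with s hs
        exact (Finset.prod_eq_zero (hs (Finset.mem_singleton_self n0)) hn0).symm
      rw [hzero.tprod_eq]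
      apply tendsto_const_nhds.congr'
      filter_upwards [eventually_ge_atTop (n0 + 1)] with N hN
      exact (Finset.prod_eq_zero (Finset.mem_range.2 (by omega)) hn0).symm
  have step2' : Tendsto (fun N => ∏ i ∈ range N, u i) atTop (𝓝 (∑' k : ℤ, T k)) := by
    apply step2.congr
    intro N
    exact step1 N
  exact tendsto_nhds_unique step2' step3
end

section
/- For complex q with |q| < 1, the sum over all integers n of (-1)^n q^(3(n+1/6)^2 / 2) equals q^(1/24) times the product over n > 0 of (1 - q^n). -/
namespace EulerPent

/-- triangular numbers -/
def tri : ℕ → ℕ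
  | 0 => 0
  | n + 1 => tri n + (n + 1)

lemma two_tri (n : ℕ) : 2 * tri n = n * (n + 1) := by
  induction n with
  | zero => rfl
  | succ n ih => show 2 * (tri n + (n+1)) = _; rw [Nat.mul_add, ih]; ring

/-- partial product ∏_{r∈[a,b)} (1 - q^r) -/
noncomputable def Qp (q : ℂ) (a b : ℕ) : ℂ := ∏ r ∈ Finset.Ico a b, (1 - q ^ r)

noncomputable def Pp (q : ℂ) (n : ℕ) : ℂ := Qp q 1 (n + 1)

noncomputable def Ee (q : ℂ) (n : ℕ) : ℂ :=
  ∑ k ∈ Finset.range n, (-1 : ℂ) ^ (k + 1) * q ^ (tri (k + 1) + n * (k + 1)) * Qp q (k + 2) (n + 1)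

noncomputable def Ss (q : ℂ) (n : ℕ) : ℂ :=
  1 + ∑ k ∈ Finset.range n,
    (-1 : ℂ) ^ (k + 1) * (q ^ (tri (k + 1) + (k + 1) ^ 2) + q ^ (tri k + (k + 1) ^ 2))

noncomputable def uu (q : ℂ) (n : ℕ) (j : ℕ) : ℂ :=
  (-1 : ℂ) ^ (j + 1) * q ^ (tri j + n * j) * Qp q j (n + 1)

lemma Qp_self (q : ℂ) (a : ℕ) : Qp q a a = 1 := by simp [Qp]

lemma key_step (q : ℂ) (n k : ℕ) (hk : k < n) :
    (-1 : ℂ) ^ (k + 1) * q ^ (tri (k + 1) + (n + 1) * (k + 1)) * Qp q (k + 2) (n + 1 + 1)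
      = (-1 : ℂ) ^ (k + 1) * q ^ (tri (k + 1) + n * (k + 1)) * Qp q (k + 2) (n + 1)
        + (uu q n (k + 1) - uu q n (k + 2)) := by
  have h1 : Qp q (k + 2) (n + 1 + 1) = Qp q (k + 2) (n + 1) * (1 - q ^ (n + 1)) :=
    Finset.prod_Ico_succ_top (by omega) _
  have h2 : Qp q (k + 1) (n + 1) = (1 - q ^ (k + 1)) * Qp q (k + 2) (n + 1) :=
    Finset.prod_eq_prod_Ico_succ_bot (by omega) _
  have e1 : tri (k + 1) + (n + 1) * (k + 1) = (tri (k + 1) + n * (k + 1)) + (k + 1) := by ring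
  have e2 : tri (k + 2) + n * (k + 2) = (tri (k + 1) + n * (k + 1)) + ((k + 1) + (n + 1)) := by
    show tri (k + 1) + (k + 2) + n * (k + 2) = _
    ring
  rw [h1, uu, uu, h2, e1, e2, pow_add, pow_add, pow_add]
  ring

lemma key (q : ℂ) (n : ℕ) : Ss q n = Pp q n + Ee q n := by
  induction n with
  | zero => simp [Ss, Pp, Ee, Qp]
  | succ n ih =>
    have hE : Ee q (n + 1)
        = Ee q n + (uu q n 1 - uu q n (n + 1))
          + (-1 : ℂ) ^ (n + 1) * q ^ (tri (n + 1) + (n + 1) * (n + 1)) := by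
      rw [Ee, Finset.sum_range_succ, Qp_self, mul_one]
      congr 1
      rw [show Ee q n + (uu q n 1 - uu q n (n + 1))
            = Ee q n + ∑ k ∈ Finset.range n, (uu q n (k + 1) - uu q n (k + 2)) by
          rw [Finset.sum_range_sub' (fun k => uu q n (k + 1))],
        Ee, ← Finset.sum_add_distrib]
      exact Finset.sum_congr rfl fun k hk => key_step q n k (Finset.mem_range.mp hk)
    have hP : Pp q (n + 1) = Pp q n * (1 - q ^ (n + 1)) :=
      Finset.prod_Ico_succ_top (by omega) _
    have hS : Ss q (n + 1) = Ss q n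
        + (-1 : ℂ) ^ (n + 1) * (q ^ (tri (n + 1) + (n + 1) ^ 2) + q ^ (tri n + (n + 1) ^ 2)) := by
      rw [Ss, Finset.sum_range_succ, Ss]; ring
    have hu1 : uu q n 1 = q ^ (n + 1) * Pp q n := by
      rw [uu, Pp, show tri 1 + n * 1 = n + 1 by show 0 + 1 + n * 1 = _; ring]
      ring
    have hun : uu q n (n + 1) = (-1 : ℂ) ^ (n + 1 + 1) * q ^ (tri n + (n + 1) ^ 2) := by
      rw [uu, Qp_self, mul_one]
      congr 2
      show tri n + (n + 1) + n * (n + 1) = _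
      ring
    have hexp : tri (n + 1) + (n + 1) * (n + 1) = tri (n + 1) + (n + 1) ^ 2 := by ring
    rw [hS, ih, hE, hP, hu1, hun, hexp, pow_succ]
    ring

end EulerPent

namespace EulerPent

open Filter Finset

variable {q : ℂ}

/-- the summand -/
noncomputable def ff (q : ℂ) (i : ℤ) : ℂ := (-1 : ℂ) ^ i * q ^ ((3 * i ^ 2 + i) / 2)

lemma ff_nat (n : ℕ) : ff q n = (-1 : ℂ) ^ n * q ^ (tri n + n ^ 2) := by
  have h : (3 * (n : ℤ) ^ 2 + n) = 2 * ((tri n + n ^ 2 : ℕ) : ℤ) := by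
    have h2 : ((2 * tri n : ℕ) : ℤ) = (n : ℤ) * (n + 1) := by exact_mod_cast two_tri n
    push_cast at h2 ⊢
    linarith [h2]
  rw [ff, h, Int.mul_ediv_cancel_left _ two_ne_zero, zpow_natCast, zpow_natCast]

lemma ff_neg (n : ℕ) : ff q (-(n + 1 : ℕ)) = (-1 : ℂ) ^ (n + 1) * q ^ (tri n + (n + 1) ^ 2) := by
  have h : (3 * (-(n + 1 : ℕ) : ℤ) ^ 2 + (-(n + 1 : ℕ) : ℤ))
      = 2 * ((tri n + (n + 1) ^ 2 : ℕ) : ℤ) := by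
    have h2 : ((2 * tri n : ℕ) : ℤ) = (n : ℤ) * (n + 1) := by exact_mod_cast two_tri n
    push_cast at h2 ⊢
    linarith [h2]
  rw [ff, h, Int.mul_ediv_cancel_left _ two_ne_zero, zpow_natCast]
  congr 1
  rw [zpow_neg, zpow_natCast, ← inv_pow, inv_neg, inv_one]

lemma tri_ge (n : ℕ) : n ≤ tri n := by
  induction n with
  | zero => simp
  | succ n ih => show _ ≤ tri n + (n + 1); omega

lemma ff_summable (hq : ‖q‖ < 1) : Summable (ff q) := by
  rw [summable_int_iff_summable_nat_and_neg]
  constructor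
  · apply Summable.of_norm_bounded (summable_geometric_of_lt_one (norm_nonneg q) hq)
    intro n
    rw [ff_nat, norm_mul, norm_pow, norm_neg, norm_one, one_pow, one_mul, norm_pow]
    exact pow_le_pow_of_le_one (norm_nonneg q) hq.le (le_trans (tri_ge n) (by omega))
  · apply Summable.of_norm_bounded (summable_geometric_of_lt_one (norm_nonneg q) hq)
    intro n
    match n with
    | 0 => simp [ff]
    | (m + 1) =>
      rw [show ((-(m + 1 : ℕ) : ℤ)) = (-((m+1 : ℕ) : ℤ)) by push_cast; ring, ff_neg,
        norm_mul, norm_pow, norm_neg, norm_one, one_pow, one_mul, norm_pow]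
      exact pow_le_pow_of_le_one (norm_nonneg q) hq.le (by nlinarith [tri_ge m])

lemma sum_Icc_eq_Ss (n : ℕ) : ∑ i ∈ Finset.Icc (-(n : ℤ)) n, ff q i = Ss q n := by
  induction n with
  | zero =>
    show ∑ i ∈ Finset.Icc (0 : ℤ) 0, ff q i = _
    rw [Finset.Icc_self, Finset.sum_singleton, Ss]
    simp [ff]
  | succ n ih =>
    have hset : Finset.Icc (-((n : ℤ) + 1)) ((n : ℤ) + 1)
        = insert (-((n : ℤ) + 1)) (insert ((n : ℤ) + 1) (Finset.Icc (-(n : ℤ)) n)) := by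
      ext x
      simp only [Finset.mem_Icc, Finset.mem_insert]
      omega
    rw [show (-((n + 1 : ℕ) : ℤ)) = -((n : ℤ) + 1) by push_cast; ring,
      show (((n + 1 : ℕ) : ℤ)) = (n : ℤ) + 1 by push_cast; ring, hset,
      Finset.sum_insert (by simp only [Finset.mem_insert, Finset.mem_Icc]; omega),
      Finset.sum_insert (by simp only [Finset.mem_Icc]; omega), ih]
    have h1 : ff q ((n : ℤ) + 1) = (-1 : ℂ) ^ (n + 1) * q ^ (tri (n + 1) + (n + 1) ^ 2) := by
      rw [show ((n : ℤ) + 1) = ((n + 1 : ℕ) : ℤ) by push_cast; ring, ff_nat]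
    have h2 : ff q (-((n : ℤ) + 1)) = (-1 : ℂ) ^ (n + 1) * q ^ (tri n + (n + 1) ^ 2) := by
      rw [show (-((n : ℤ) + 1)) = (-((n + 1 : ℕ) : ℤ)) by push_cast; ring, ff_neg]
    rw [h1, h2, Ss, Ss, Finset.sum_range_succ]
    ring

end EulerPent

namespace EulerPent

open Filter Finset

variable {q : ℂ}

lemma one_sub_pow_ne (hq : ‖q‖ < 1) (n : ℕ) : (1 : ℂ) - q ^ (n + 1) ≠ 0 := by
  intro h
  have h1 : q ^ (n + 1) = 1 := by linear_combination -h
  have : ‖q ^ (n + 1)‖ < 1 := by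
    rw [norm_pow]
    exact pow_lt_one₀ (norm_nonneg q) hq (by omega)
  rw [h1, norm_one] at this
  exact lt_irrefl _ this

lemma summable_geom_shift (hq : ‖q‖ < 1) (c : ℝ) :
    Summable fun n : ℕ => c * ‖q‖ ^ (n + 1) := by
  apply Summable.congr (((summable_geometric_of_lt_one (norm_nonneg q) hq).mul_left
    (c * ‖q‖)))
  intro n
  rw [pow_succ]
  ring

lemma multipliable_prod (hq : ‖q‖ < 1) : Multipliable fun n : ℕ => (1 : ℂ) - q ^ (n + 1) := by
  apply Complex.multipliable_of_summable_log
  apply Summable.of_norm_bounded_eventually_nat (g := fun n => 3 / 2 * ‖q‖ ^ (n + 1))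
    (summable_geom_shift hq _)
  have h0 : Tendsto (fun n : ℕ => ‖q‖ ^ (n + 1)) atTop (nhds 0) := by
    have := (tendsto_pow_atTop_nhds_zero_of_lt_one (norm_nonneg q) hq).comp
      (tendsto_add_atTop_nat 1)
    exact this
  filter_upwards [h0.eventually_le_const (by norm_num : (0:ℝ) < 1/2)] with n hn
  have hz : ‖-(q ^ (n + 1))‖ ≤ 1 / 2 := by rwa [norm_neg, norm_pow]
  have := Complex.norm_log_one_add_half_le_self hz
  rw [norm_neg, norm_pow] at this
  calc ‖Complex.log (1 - q ^ (n + 1))‖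
      = ‖Complex.log (1 + -(q ^ (n + 1)))‖ := by rw [sub_eq_add_neg]
    _ ≤ 3 / 2 * ‖q‖ ^ (n + 1) := this

end EulerPent

namespace EulerPent

open Filter Finset

variable {q : ℂ}

lemma Qp_bound (hq : ‖q‖ < 1) (a b : ℕ) : ‖Qp q a b‖ ≤ Real.exp ((1 - ‖q‖)⁻¹) := by
  calc ‖Qp q a b‖ = ∏ r ∈ Finset.Ico a b, ‖1 - q ^ r‖ := norm_prod _ _
    _ ≤ ∏ r ∈ Finset.Ico a b, (1 + ‖q‖ ^ r) := by
        apply Finset.prod_le_prod (fun r _ => norm_nonneg _)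
        intro r _
        calc ‖1 - q ^ r‖ ≤ ‖(1 : ℂ)‖ + ‖q ^ r‖ := norm_sub_le _ _
          _ = 1 + ‖q‖ ^ r := by rw [norm_one, norm_pow]
    _ ≤ ∏ r ∈ Finset.Ico a b, Real.exp (‖q‖ ^ r) := by
        apply Finset.prod_le_prod (fun r _ => by positivity)
        intro r _
        rw [add_comm]
        exact Real.add_one_le_exp _
    _ = Real.exp (∑ r ∈ Finset.Ico a b, ‖q‖ ^ r) := (Real.exp_sum _ _).symm
    _ ≤ Real.exp ((1 - ‖q‖)⁻¹) := by
        apply Real.exp_le_exp.mpr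
        rw [← tsum_geometric_of_lt_one (norm_nonneg q) hq]
        exact (summable_geometric_of_lt_one (norm_nonneg q) hq).sum_le_tsum _ (fun i _ => pow_nonneg (norm_nonneg q) i)

lemma Ee_bound (hq : ‖q‖ < 1) (n : ℕ) :
    ‖Ee q n‖ ≤ (n : ℝ) * (‖q‖ ^ (n + 1) * Real.exp ((1 - ‖q‖)⁻¹)) := by
  calc ‖Ee q n‖ ≤ ∑ k ∈ Finset.range n,
        ‖(-1 : ℂ) ^ (k + 1) * q ^ (tri (k + 1) + n * (k + 1)) * Qp q (k + 2) (n + 1)‖ :=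
      norm_sum_le _ _
    _ ≤ ∑ _k ∈ Finset.range n, ‖q‖ ^ (n + 1) * Real.exp ((1 - ‖q‖)⁻¹) := by
        apply Finset.sum_le_sum
        intro k _
        rw [norm_mul, norm_mul, norm_pow, norm_neg, norm_one, one_pow, one_mul, norm_pow]
        apply mul_le_mul _ (Qp_bound hq _ _) (norm_nonneg _)
          (pow_nonneg (norm_nonneg q) _)
        exact pow_le_pow_of_le_one (norm_nonneg q) hq.le (by nlinarith [tri_ge (k + 1)])
    _ = (n : ℝ) * (‖q‖ ^ (n + 1) * Real.exp ((1 - ‖q‖)⁻¹)) := by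
        rw [Finset.sum_const, Finset.card_range, nsmul_eq_mul]

lemma Ee_tendsto (hq : ‖q‖ < 1) : Tendsto (fun n => Ee q n) atTop (nhds 0) := by
  apply squeeze_zero_norm (Ee_bound hq)
  have h := (tendsto_pow_const_mul_const_pow_of_lt_one 1 (norm_nonneg q) hq).const_mul
    (‖q‖ * Real.exp ((1 - ‖q‖)⁻¹))
  rw [mul_zero] at h
  apply h.congr
  intro n
  rw [pow_one, pow_succ]
  ring

lemma Pp_tendsto (hq : ‖q‖ < 1) :
    Tendsto (fun n => Pp q n) atTop (nhds (∏' n : ℕ, (1 - q ^ (n + 1)))) := by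
  have h := (multipliable_prod hq).hasProd.tendsto_prod_nat
  apply h.congr
  intro n
  rw [Pp, Qp, Finset.prod_Ico_eq_prod_range]
  simp [add_comm]

lemma Ss_tendsto (hq : ‖q‖ < 1) :
    Tendsto (fun n => Ss q n) atTop (nhds (∑' i : ℤ, ff q i)) := by
  have hmono : Monotone (fun n : ℕ => Finset.Icc (-(n : ℤ)) n) := by
    intro a b hab
    apply Finset.Icc_subset_Icc <;> omega
  have hexh : ∀ x : ℤ, ∃ n : ℕ, x ∈ Finset.Icc (-(n : ℤ)) n := by
    intro x
    exact ⟨x.natAbs, by simp only [Finset.mem_Icc]; omega⟩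
  have h := (ff_summable hq).hasSum.comp
    (Filter.tendsto_atTop_finset_of_monotone hmono hexh)
  apply h.congr
  intro n
  exact sum_Icc_eq_Ss n

theorem main (hq : ‖q‖ < 1) :
    ∑' i : ℤ, ff q i = ∏' n : ℕ, (1 - q ^ (n + 1)) := by
  have h2 : Tendsto (fun n => Ss q n) atTop
      (nhds ((∏' n : ℕ, (1 - q ^ (n + 1))) + 0)) := by
    apply Tendsto.congr (fun n => (key q n).symm)
    exact (Pp_tendsto hq).add (Ee_tendsto hq)
  rw [add_zero] at h2
  exact tendsto_nhds_unique (Ss_tendsto hq) h2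

end EulerPent


/-- Euler's pentagonal number identity: for `‖q‖ < 1`,
`∑_{n∈ℤ} (-1)^n q^((3n²+n)/2) = ∏_{n>0} (1 - q^n)`.
(This is the fractional-power-free form of
`∑_{n∈ℤ} (-1)^n q^(3(n+1/6)²/2) = q^(1/24) ∏_{n>0}(1-q^n)`.) -/
theorem euler_pentagonal_identity (q : ℂ) (hq : ‖q‖ < 1) :
    ∑' n : ℤ, (-1 : ℂ) ^ n * q ^ ((3 * n ^ 2 + n) / 2) =
    ∏' n : ℕ, (1 - q ^ (n + 1)) := by
  exact EulerPent.main hq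
end

section
/- For every positive integer n, σ_7(n) = σ_3(n) + 120 ∑_{m=1}^{n-1} σ_3(m) σ_3(n-m). -/
open Finset

namespace SigmaSevenAux

/-! ### Faulhaber-type polynomial lemmas -/

lemma fau2 (e : ℕ) : 6 * ∑ x ∈ range e, (x:ℤ)^2 = 2*(e:ℤ)^3 - 3*(e:ℤ)^2 + e := by
  induction e with
  | zero => simp
  | succ m ih =>
    rw [Finset.sum_range_succ]
    push_cast
    linear_combination ih

lemma fau3 (e : ℕ) : 4 * ∑ x ∈ range e, (x:ℤ)^3 = (e:ℤ)^4 - 2*(e:ℤ)^3 + (e:ℤ)^2 := by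
  induction e with
  | zero => simp
  | succ m ih =>
    rw [Finset.sum_range_succ]
    push_cast
    linear_combination ih

lemma fau4 (e : ℕ) : 30 * ∑ x ∈ range e, (x:ℤ)^4 = 6*(e:ℤ)^5 - 15*(e:ℤ)^4 + 10*(e:ℤ)^3 - e := by
  induction e with
  | zero => simp
  | succ m ih =>
    rw [Finset.sum_range_succ]
    push_cast
    linear_combination ih

lemma inner_int (e : ℕ) : 30 * ∑ x ∈ range e, (x:ℤ)^2 * ((e:ℤ) - x)^2 = (e:ℤ)^5 - e := by
  have h : ∑ x ∈ range e, (x:ℤ)^2*((e:ℤ)-x)^2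
      = (∑ x ∈ range e, (x:ℤ)^4) - 2*(e:ℤ)*(∑ x ∈ range e, (x:ℤ)^3)
        + (e:ℤ)^2*(∑ x ∈ range e, (x:ℤ)^2) := by
    rw [Finset.mul_sum, Finset.mul_sum, ← Finset.sum_sub_distrib, ← Finset.sum_add_distrib]
    exact Finset.sum_congr rfl fun x _ => by ring
  linear_combination 30*h + fau4 e + (-15*(e:ℤ))*fau3 e + 5*(e:ℤ)^2*fau2 e

lemma inner_int' (e : ℕ) : 30 * ∑ x ∈ Ico 1 e, (x:ℤ)^2 * ((e:ℤ) - x)^2 = (e:ℤ)^5 - e := by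
  rcases Nat.eq_zero_or_pos e with rfl | he
  · simp
  · rw [← inner_int e]
    congr 1
    rw [Finset.range_eq_Ico, Finset.sum_eq_sum_Ico_succ_bot he]
    simp

lemma inner_nat (e : ℕ) : 30 * (∑ x ∈ Ico 1 e, x^2*(e-x)^2*e^2) + e^3 = e^7 := by
  have cast_eq : ((∑ x ∈ Ico 1 e, x^2*(e-x)^2*e^2 : ℕ) : ℤ)
      = (e:ℤ)^2 * ∑ x ∈ Ico 1 e, (x:ℤ)^2*((e:ℤ)-x)^2 := by
    push_cast
    rw [Finset.mul_sum]
    refine Finset.sum_congr rfl fun x hx => ?_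
    have hxe : x ≤ e := le_of_lt (Finset.mem_Ico.mp hx).2
    rw [Nat.cast_sub hxe]
    ring
  have h2 : ((30 * (∑ x ∈ Ico 1 e, x^2*(e-x)^2*e^2) + e^3 : ℕ) : ℤ) = ((e^7 : ℕ) : ℤ) := by
    push_cast [cast_eq]
    linear_combination (e:ℤ)^2 * inner_int' e
  exact_mod_cast h2

end SigmaSevenAux


open Finset

namespace SigmaSevenAux

/-- Solutions of `a*x + b*y = n` in positive integers. -/
def Sol (n : ℕ) : Finset (ℕ × ℕ × ℕ × ℕ) :=
  ((Finset.Icc 1 n ×ˢ Finset.Icc 1 n) ×ˢ (Finset.Icc 1 n ×ˢ Finset.Icc 1 n)).image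
      (fun q => (q.1.1, q.1.2, q.2.1, q.2.2)) |>.filter
    fun p => p.1 * p.2.2.1 + p.2.1 * p.2.2.2 = n

lemma mem_Sol {n : ℕ} {p : ℕ × ℕ × ℕ × ℕ} :
    p ∈ Sol n ↔ 0 < p.1 ∧ 0 < p.2.1 ∧ 0 < p.2.2.1 ∧ 0 < p.2.2.2 ∧
      p.1 * p.2.2.1 + p.2.1 * p.2.2.2 = n := by
  obtain ⟨a, b, x, y⟩ := p
  simp only [Sol, Finset.mem_filter, Finset.mem_image, Finset.mem_product, Finset.mem_Icc,
    Prod.exists, Prod.mk.injEq]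
  constructor
  · rintro ⟨⟨a', b', x', y', ⟨⟨⟨h1, h2⟩, h3, h4⟩, ⟨h5, h6⟩, h7, h8⟩, rfl, rfl, rfl, rfl⟩, he⟩
    exact ⟨h1, h3, h5, h7, he⟩
  · rintro ⟨h1, h2, h3, h4, he⟩
    have hax : a ≤ a * x := Nat.le_mul_of_pos_right a h3
    have hby : b ≤ b * y := Nat.le_mul_of_pos_right b h4
    have hxa : x ≤ a * x := Nat.le_mul_of_pos_left x h1
    have hyb : y ≤ b * y := Nat.le_mul_of_pos_left y h2
    exact ⟨⟨a, b, x, y, ⟨⟨⟨h1, by omega⟩, h2, by omega⟩, ⟨h3, by omega⟩, h4, by omega⟩,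
      rfl, rfl, rfl, rfl⟩, he⟩

end SigmaSevenAux

namespace SigmaSevenAux

/-- Three-way split of a sum by comparing two coordinates. -/
lemma tri (s : Finset (ℕ × ℕ × ℕ × ℕ)) (f g h : ℕ × ℕ × ℕ × ℕ → ℕ) :
    ∑ p ∈ s, f p
      = ∑ p ∈ s.filter (fun p => g p < h p), f p
        + ∑ p ∈ s.filter (fun p => h p < g p), f p
        + ∑ p ∈ s.filter (fun p => g p = h p), f p := by
  have h1 := Finset.sum_filter_add_sum_filter_not s (fun p => g p < h p) f
  have h2 := Finset.sum_filter_add_sum_filter_not (s.filter fun p => ¬ g p < h p)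
      (fun p => h p < g p) f
  rw [Finset.filter_filter, Finset.filter_filter] at h2
  have e1 : s.filter (fun p => ¬ g p < h p ∧ h p < g p) = s.filter (fun p => h p < g p) := by
    apply Finset.filter_congr
    intro p _
    constructor
    · intro hh; exact hh.2
    · intro hh; exact ⟨by omega, hh⟩
  have e2 : s.filter (fun p => ¬ g p < h p ∧ ¬ h p < g p) = s.filter (fun p => g p = h p) := by
    apply Finset.filter_congr
    intro p _
    constructor
    · intro hh; omega
    · intro hh; omega
  rw [e1, e2] at h2
  omega

def sw (p : ℕ × ℕ × ℕ × ℕ) : ℕ × ℕ × ℕ × ℕ := (p.2.1, p.1, p.2.2.2, p.2.2.1)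

lemma sum_sw (n : ℕ) (P : ℕ × ℕ × ℕ × ℕ → Prop) [DecidablePred P]
    (f : ℕ × ℕ × ℕ × ℕ → ℕ) :
    ∑ p ∈ (Sol n).filter P, f p
      = ∑ p ∈ (Sol n).filter (fun p => P (sw p)), f (sw p) := by
  apply Finset.sum_nbij' sw sw
  · rintro ⟨a, b, x, y⟩ hp
    change (a, b, x, y) ∈ (Sol n).filter P at hp
    change sw (a, b, x, y) ∈ (Sol n).filter (fun p => P (sw p))
    simp only [Finset.mem_coe, Finset.mem_filter, mem_Sol] at hp ⊢
    simp only [sw] at hp ⊢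
    refine ⟨⟨hp.1.2.1, hp.1.1, hp.1.2.2.2.1, hp.1.2.2.1, by omega⟩, hp.2⟩
  · rintro ⟨a, b, x, y⟩ hp
    change (a, b, x, y) ∈ (Sol n).filter (fun p => P (sw p)) at hp
    change sw (a, b, x, y) ∈ (Sol n).filter P
    simp only [Finset.mem_coe, Finset.mem_filter, mem_Sol] at hp ⊢
    simp only [sw] at hp ⊢
    refine ⟨⟨hp.1.2.1, hp.1.1, hp.1.2.2.2.1, hp.1.2.2.1, by omega⟩, hp.2⟩
  · rintro ⟨a, b, x, y⟩ _; rfl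
  · rintro ⟨a, b, x, y⟩ _; rfl
  · rintro ⟨a, b, x, y⟩ _; rfl

/-- The Liouville-type bijection `(a,b,x,y) ↦ (a, a+b, x-y, y)`. -/
lemma sum_psi (n : ℕ) (w : ℕ → ℕ → ℕ) :
    ∑ p ∈ (Sol n).filter (fun p => p.1 < p.2.1), w p.2.2.1 p.2.2.2
      = ∑ p ∈ (Sol n).filter (fun p => p.2.2.2 < p.2.2.1), w (p.2.2.1 - p.2.2.2) p.2.2.2 := by
  apply Finset.sum_nbij' (fun p => (p.1, p.2.1 - p.1, p.2.2.1 + p.2.2.2, p.2.2.2))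
      (fun q => (q.1, q.1 + q.2.1, q.2.2.1 - q.2.2.2, q.2.2.2))
  · rintro ⟨a, b, x, y⟩ hp
    simp only [Finset.mem_filter, mem_Sol] at hp ⊢
    obtain ⟨⟨h1, h2, h3, h4, he⟩, hab⟩ := hp
    have e1 : a * (x + y) = a * x + a * y := by ring
    have e2 : (b - a) * y = b * y - a * y := Nat.sub_mul b a y
    have e3 : a * y ≤ b * y := Nat.mul_le_mul_right y (le_of_lt hab)
    exact ⟨⟨by omega, by omega, by omega, by omega, by omega⟩, by omega⟩
  · rintro ⟨a, b, x, y⟩ hq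
    simp only [Finset.mem_filter, mem_Sol] at hq ⊢
    obtain ⟨⟨h1, h2, h3, h4, he⟩, hxy⟩ := hq
    have e1' : a * (x - y) + a * y = a * x := by
      rw [← Nat.mul_add, Nat.sub_add_cancel (le_of_lt hxy)]
    have e2 : (a + b) * y = a * y + b * y := by ring
    have e3 : a * y ≤ a * x := Nat.mul_le_mul_left a (le_of_lt hxy)
    exact ⟨⟨by omega, by omega, by omega, by omega, by omega⟩, by omega⟩
  · rintro ⟨a, b, x, y⟩ hp
    simp only [Finset.mem_filter, mem_Sol] at hp
    dsimp only
    simp only [Prod.mk.injEq, true_and, and_true]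
    omega
  · rintro ⟨a, b, x, y⟩ hq
    simp only [Finset.mem_filter, mem_Sol] at hq
    dsimp only
    simp only [Prod.mk.injEq, true_and, and_true]
    omega
  · rintro ⟨a, b, x, y⟩ _
    dsimp only
    simp only [Nat.add_sub_cancel]

/-- Diagonal `a = b`: reduces to a sum over divisors. -/
lemma sum_diag_ab (n : ℕ) (hn : 0 < n) (w : ℕ → ℕ → ℕ) :
    ∑ p ∈ (Sol n).filter (fun p => p.1 = p.2.1), w p.2.2.1 p.2.2.2
      = ∑ e ∈ n.divisors, ∑ x ∈ Ico 1 e, w x (e - x) := by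
  rw [Finset.sum_sigma' n.divisors (fun e => Ico 1 e) (fun e x => w x (e - x))]
  apply Finset.sum_nbij' (fun p => (⟨p.2.2.1 + p.2.2.2, p.2.2.1⟩ : (_ : ℕ) × ℕ))
      (fun q => (n / q.1, n / q.1, q.2, q.1 - q.2))
  · rintro ⟨a, b, x, y⟩ hp
    simp only [Finset.mem_filter, mem_Sol] at hp
    obtain ⟨⟨h1, h2, h3, h4, he⟩, hab⟩ := hp
    subst hab
    have hxy : a * (x + y) = n := by rw [Nat.mul_add]; exact he
    simp only [Finset.mem_sigma, Nat.mem_divisors, Finset.mem_Ico]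
    exact ⟨⟨Dvd.intro_left a hxy, by omega⟩, by omega, by omega⟩
  · rintro ⟨e, x⟩ hq
    simp only [Finset.mem_sigma, Nat.mem_divisors, Finset.mem_Ico] at hq
    obtain ⟨⟨hd, hn0⟩, hx1, hxe⟩ := hq
    have hde : 0 < e := by omega
    have hq0 : 0 < n / e := Nat.div_pos (Nat.le_of_dvd hn hd) hde
    have heq : n / e * x + n / e * (e - x) = n := by
      rw [← Nat.mul_add, Nat.add_sub_cancel' (le_of_lt hxe), Nat.div_mul_cancel hd]
    simp only [Finset.mem_filter, mem_Sol]
    exact ⟨⟨hq0, hq0, by omega, by omega, heq⟩, trivial⟩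
  · rintro ⟨a, b, x, y⟩ hp
    simp only [Finset.mem_filter, mem_Sol] at hp
    obtain ⟨⟨h1, h2, h3, h4, he⟩, hab⟩ := hp
    subst hab
    have hxy : a * (x + y) = n := by rw [Nat.mul_add]; exact he
    have hda : n / (x + y) = a := by rw [← hxy]; exact Nat.mul_div_cancel a (by omega)
    dsimp only
    simp only [Prod.mk.injEq, hda, true_and, and_true]
    omega
  · rintro ⟨e, x⟩ hq
    simp only [Finset.mem_sigma, Nat.mem_divisors, Finset.mem_Ico] at hq
    have hxe : x + (e - x) = e := by omega
    dsimp only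
    simp only [hxe]
  · rintro ⟨a, b, x, y⟩ hp
    dsimp only
    simp only [Nat.add_sub_cancel_left]

end SigmaSevenAux

namespace SigmaSevenAux

lemma conv_eq (n : ℕ) (hn : 0 < n) :
    ∑ m ∈ Ico 1 n, ArithmeticFunction.sigma 3 m * ArithmeticFunction.sigma 3 (n - m)
      = ∑ p ∈ Sol n, p.2.2.1 ^ 3 * p.2.2.2 ^ 3 := by
  have step1 : ∀ m ∈ Ico 1 n,
      ArithmeticFunction.sigma 3 m * ArithmeticFunction.sigma 3 (n - m)
        = ∑ q ∈ m.divisors ×ˢ (n - m).divisors, q.1 ^ 3 * q.2 ^ 3 := by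
    intro m hm
    rw [ArithmeticFunction.sigma_apply, ArithmeticFunction.sigma_apply, Finset.sum_mul_sum]
    rw [← Finset.sum_product']
  rw [Finset.sum_congr rfl step1,
      Finset.sum_sigma' (Ico 1 n) (fun m => m.divisors ×ˢ (n - m).divisors)
        (fun _ q => q.1 ^ 3 * q.2 ^ 3)]
  apply Finset.sum_nbij' (fun q => (q.1 / q.2.1, (n - q.1) / q.2.2, q.2.1, q.2.2))
      (fun p => (⟨p.1 * p.2.2.1, (p.2.2.1, p.2.2.2)⟩ : (_ : ℕ) × ℕ × ℕ))
  · rintro ⟨m, x, y⟩ hq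
    simp only [Finset.mem_sigma, Finset.mem_Ico, Finset.mem_product, Nat.mem_divisors] at hq
    obtain ⟨⟨hm1, hmn⟩, ⟨hxm, hm0⟩, hynm, hnm0⟩ := hq
    have hx0 : 0 < x := Nat.pos_of_dvd_of_pos hxm (by omega)
    have hy0 : 0 < y := Nat.pos_of_dvd_of_pos hynm (by omega)
    have h1 : m / x * x = m := Nat.div_mul_cancel hxm
    have h2 : (n - m) / y * y = n - m := Nat.div_mul_cancel hynm
    have h3 : 0 < m / x := Nat.div_pos (Nat.le_of_dvd (by omega) hxm) hx0
    have h4 : 0 < (n - m) / y := Nat.div_pos (Nat.le_of_dvd (by omega) hynm) hy0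
    dsimp only
    simp only [mem_Sol]
    exact ⟨h3, h4, hx0, hy0, by omega⟩
  · rintro ⟨a, b, x, y⟩ hp
    simp only [mem_Sol] at hp
    obtain ⟨h1, h2, h3, h4, he⟩ := hp
    have hax : 0 < a * x := Nat.mul_pos h1 h3
    have hby : 0 < b * y := Nat.mul_pos h2 h4
    have hnm : n - a * x = b * y := by omega
    dsimp only
    simp only [Finset.mem_sigma, Finset.mem_Ico, Finset.mem_product, Nat.mem_divisors, hnm]
    exact ⟨⟨by omega, by omega⟩, ⟨Dvd.intro_left a rfl, by omega⟩, Dvd.intro_left b rfl, by omega⟩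
  · rintro ⟨m, x, y⟩ hq
    simp only [Finset.mem_sigma, Finset.mem_Ico, Finset.mem_product, Nat.mem_divisors] at hq
    obtain ⟨⟨hm1, hmn⟩, ⟨hxm, hm0⟩, hynm, hnm0⟩ := hq
    dsimp only
    have h1 : m / x * x = m := Nat.div_mul_cancel hxm
    simp only [h1]
  · rintro ⟨a, b, x, y⟩ hp
    simp only [mem_Sol] at hp
    obtain ⟨h1, h2, h3, h4, he⟩ := hp
    have hnm : n - a * x = b * y := by omega
    dsimp only
    simp only [Prod.mk.injEq, hnm, Nat.mul_div_cancel a h3, Nat.mul_div_cancel b h4, true_and,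
      and_true]
  · rintro ⟨m, x, y⟩ _
    rfl

end SigmaSevenAux

open SigmaSevenAux

/-- `σ₇(n) = σ₃(n) + 120 ∑_{m=1}^{n-1} σ₃(m) σ₃(n-m)` for every positive integer `n`,
where `σ_k(n)` is the sum of the `k`-th powers of the positive divisors of `n`. -/
theorem sigma_seven_eq (n : ℕ) (hn : 0 < n) :
    ArithmeticFunction.sigma 7 n = ArithmeticFunction.sigma 3 n +
      120 * ∑ m ∈ Finset.Ico 1 n, ArithmeticFunction.sigma 3 m * ArithmeticFunction.sigma 3 (n - m) := by

  -- region sums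
  have c2 : ∑ p ∈ Sol n, p.2.2.1^3*p.2.2.2^3
      = ∑ p ∈ (Sol n).filter (fun p => p.2.2.1 < p.2.2.2), p.2.2.1^3*p.2.2.2^3
        + ∑ p ∈ (Sol n).filter (fun p => p.2.2.2 < p.2.2.1), p.2.2.1^3*p.2.2.2^3
        + ∑ p ∈ (Sol n).filter (fun p => p.2.2.1 = p.2.2.2), p.2.2.1^3*p.2.2.2^3 :=
    tri (Sol n) (fun p => p.2.2.1^3*p.2.2.2^3) (fun p => p.2.2.1) (fun p => p.2.2.2)
  have c3 : ∑ p ∈ (Sol n).filter (fun p => p.2.2.1 < p.2.2.2), p.2.2.1^3*p.2.2.2^3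
      = ∑ p ∈ (Sol n).filter (fun p => p.2.2.2 < p.2.2.1), p.2.2.1^3*p.2.2.2^3 := by
    have := sum_sw n (fun p => p.2.2.1 < p.2.2.2) (fun p => p.2.2.1^3*p.2.2.2^3)
    simp only [sw] at this
    exact this.trans (Finset.sum_congr rfl fun p _ => by ring)
  have c4 : ∑ p ∈ Sol n, p.2.2.1^2*p.2.2.2^2*(p.2.2.1+p.2.2.2)^2
      = ∑ p ∈ (Sol n).filter (fun p => p.2.2.1 < p.2.2.2), p.2.2.1^2*p.2.2.2^2*(p.2.2.1+p.2.2.2)^2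
        + ∑ p ∈ (Sol n).filter (fun p => p.2.2.2 < p.2.2.1), p.2.2.1^2*p.2.2.2^2*(p.2.2.1+p.2.2.2)^2
        + ∑ p ∈ (Sol n).filter (fun p => p.2.2.1 = p.2.2.2), p.2.2.1^2*p.2.2.2^2*(p.2.2.1+p.2.2.2)^2 :=
    tri (Sol n) _ (fun p => p.2.2.1) (fun p => p.2.2.2)
  have c5 : ∑ p ∈ (Sol n).filter (fun p => p.2.2.1 < p.2.2.2), p.2.2.1^2*p.2.2.2^2*(p.2.2.1+p.2.2.2)^2
      = ∑ p ∈ (Sol n).filter (fun p => p.2.2.2 < p.2.2.1), p.2.2.1^2*p.2.2.2^2*(p.2.2.1+p.2.2.2)^2 := by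
    have := sum_sw n (fun p => p.2.2.1 < p.2.2.2)
      (fun p => p.2.2.1^2*p.2.2.2^2*(p.2.2.1+p.2.2.2)^2)
    simp only [sw] at this
    exact this.trans (Finset.sum_congr rfl fun p _ => by ring)
  have c6 : ∑ p ∈ Sol n, p.2.2.1^2*p.2.2.2^2*(p.2.2.1+p.2.2.2)^2
      = ∑ p ∈ (Sol n).filter (fun p => p.1 < p.2.1), p.2.2.1^2*p.2.2.2^2*(p.2.2.1+p.2.2.2)^2
        + ∑ p ∈ (Sol n).filter (fun p => p.2.1 < p.1), p.2.2.1^2*p.2.2.2^2*(p.2.2.1+p.2.2.2)^2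
        + ∑ p ∈ (Sol n).filter (fun p => p.1 = p.2.1), p.2.2.1^2*p.2.2.2^2*(p.2.2.1+p.2.2.2)^2 :=
    tri (Sol n) _ (fun p => p.1) (fun p => p.2.1)
  have c7 : ∑ p ∈ (Sol n).filter (fun p => p.1 < p.2.1), p.2.2.1^2*p.2.2.2^2*(p.2.2.1+p.2.2.2)^2
      = ∑ p ∈ (Sol n).filter (fun p => p.2.1 < p.1), p.2.2.1^2*p.2.2.2^2*(p.2.2.1+p.2.2.2)^2 := by
    have := sum_sw n (fun p => p.1 < p.2.1)
      (fun p => p.2.2.1^2*p.2.2.2^2*(p.2.2.1+p.2.2.2)^2)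
    simp only [sw] at this
    exact this.trans (Finset.sum_congr rfl fun p _ => by ring)
  have c8 : ∑ p ∈ (Sol n).filter (fun p => p.1 < p.2.1), p.2.2.1^2*p.2.2.2^2*(p.2.2.1+p.2.2.2)^2
      = ∑ p ∈ (Sol n).filter (fun p => p.2.2.2 < p.2.2.1),
          (p.2.2.1-p.2.2.2)^2*p.2.2.2^2*((p.2.2.1-p.2.2.2)+p.2.2.2)^2 :=
    sum_psi n (fun u v => u^2*v^2*(u+v)^2)
  have c9 : ∑ p ∈ (Sol n).filter (fun p => p.2.2.2 < p.2.2.1), p.2.2.1^2*p.2.2.2^2*(p.2.2.1+p.2.2.2)^2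
      = ∑ p ∈ (Sol n).filter (fun p => p.2.2.2 < p.2.2.1),
          (p.2.2.1-p.2.2.2)^2*p.2.2.2^2*((p.2.2.1-p.2.2.2)+p.2.2.2)^2
        + 4 * ∑ p ∈ (Sol n).filter (fun p => p.2.2.2 < p.2.2.1), p.2.2.1^3*p.2.2.2^3 := by
    rw [Finset.mul_sum, ← Finset.sum_add_distrib]
    refine Finset.sum_congr rfl fun p hp => ?_
    simp only [Finset.mem_filter] at hp
    obtain ⟨a, b, x, y⟩ := p
    have hyx : y < x := hp.2
    dsimp only
    obtain ⟨u, rfl⟩ : ∃ u, x = u + y := ⟨x - y, by omega⟩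
    rw [Nat.add_sub_cancel]
    ring
  have c10 : ∑ p ∈ (Sol n).filter (fun p => p.2.2.1 = p.2.2.2), p.2.2.1^2*p.2.2.2^2*(p.2.2.1+p.2.2.2)^2
      = 4 * ∑ p ∈ (Sol n).filter (fun p => p.2.2.1 = p.2.2.2), p.2.2.1^3*p.2.2.2^3 := by
    rw [Finset.mul_sum]
    refine Finset.sum_congr rfl fun p hp => ?_
    simp only [Finset.mem_filter] at hp
    obtain ⟨a, b, x, y⟩ := p
    have hxy : x = y := hp.2
    dsimp only
    subst hxy
    ring
  have c11 : ∑ p ∈ (Sol n).filter (fun p => p.1 = p.2.1), p.2.2.1^2*p.2.2.2^2*(p.2.2.1+p.2.2.2)^2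
      = ∑ e ∈ n.divisors, ∑ x ∈ Finset.Ico 1 e, x^2*(e-x)^2*(x+(e-x))^2 :=
    sum_diag_ab n hn (fun u v => u^2*v^2*(u+v)^2)
  have c12 : ∑ e ∈ n.divisors, ∑ x ∈ Finset.Ico 1 e, x^2*(e-x)^2*(x+(e-x))^2
      = ∑ e ∈ n.divisors, ∑ x ∈ Finset.Ico 1 e, x^2*(e-x)^2*e^2 := by
    refine Finset.sum_congr rfl fun e _ => Finset.sum_congr rfl fun x hx => ?_
    have hxe : x < e := (Finset.mem_Ico.mp hx).2
    have : x + (e - x) = e := by omega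
    rw [this]
  have c13 : (ArithmeticFunction.sigma 7) n = ∑ e ∈ n.divisors, e^7 :=
    ArithmeticFunction.sigma_apply
  have c13' : (ArithmeticFunction.sigma 3) n = ∑ e ∈ n.divisors, e^3 :=
    ArithmeticFunction.sigma_apply
  have c14 : ∑ e ∈ n.divisors, e^7
      = 30 * (∑ e ∈ n.divisors, ∑ x ∈ Finset.Ico 1 e, x^2*(e-x)^2*e^2)
        + ∑ e ∈ n.divisors, e^3 := by
    rw [Finset.mul_sum, ← Finset.sum_add_distrib]
    exact Finset.sum_congr rfl fun e _ => (inner_nat e).symm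
  have c1 : ∑ m ∈ Finset.Ico 1 n,
        ArithmeticFunction.sigma 3 m * ArithmeticFunction.sigma 3 (n - m)
      = ∑ p ∈ Sol n, p.2.2.1^3*p.2.2.2^3 := conv_eq n hn
  omega
end

section
/- For every positive integer n, 11 σ_9(n) = 21 σ_5(n) - 10 σ_3(n) + 5040 ∑_{m=1}^{n-1} σ_3(m) σ_5(n-m). -/
/-!
`E₄ E₆` and `E₁₀` are level-one modular forms of weight `10 < 12`, so by the Sturm bound their
difference vanishes as soon as its constant term does; both constant terms are `1`, hence
`E₄ E₆ = E₁₀`. With `E_k = 1 - (2k / B_k) ∑ σ_{k-1}(m) qᵐ`, i.e. the normalisations `240`, `-504`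
and `-264` for `k = 4, 6, 10`, comparing the `n`-th coefficients gives the identity times `24`.
-/

open ModularForm EisensteinSeries UpperHalfPlane PowerSeries
open scoped MatrixGroups ArithmeticFunction.sigma

theorem PowerSeries.coeff_mul_eq_add_sum_Ico {R : Type*} [Semiring R] (p q : R⟦X⟧) {n : ℕ}
    (hn : 0 < n) :
    coeff n (p * q) = coeff 0 p * coeff n q + coeff n p * coeff 0 q +
      ∑ m ∈ Finset.Ico 1 n, coeff m p * coeff (n - m) q := by
  rw [coeff_mul, Finset.Nat.sum_antidiagonal_eq_sum_range_succ (fun i j ↦ coeff i p * coeff j q),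
    Finset.sum_range_succ, Finset.sum_range_eq_add_Ico _ hn, Nat.sub_zero, Nat.sub_self]
  abel

namespace ModularForm

theorem eq_of_weight_lt_twelve_of_qExpansion_coeff_zero_eq {k : ℤ} (hk : k < 12)
    {f g : ModularForm 𝒮ℒ k} (h : coeff 0 (qExpansion 1 f) = coeff 0 (qExpansion 1 g)) :
    f = g := by
  rw [← sub_eq_zero]
  refine sturm_bound_levelOne ?_
  rw [show k.toNat / 12 = 0 by omega, Nat.cast_zero, pos_iff_ne_zero,
    order_ne_zero_iff_constCoeff_eq_zero, ← coeff_zero_eq_constantCoeff_apply, FunLike.coe_sub,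
    ModularForm.qExpansion_sub one_pos one_mem_strictPeriods_SL, map_sub, h, sub_self]

noncomputable abbrev E₁₀ : ModularForm 𝒮ℒ 10 := E (by norm_num : 3 ≤ 10)

theorem E₄_qExpansion_coeff {m : ℕ} (hm : m ≠ 0) :
    coeff m (qExpansion 1 E₄) = 240 * σ 3 m := by
  norm_num [E_qExpansion_coeff _ ⟨2, rfl⟩, hm, show bernoulli 4 = -1 / 30 by decide +kernel]

theorem E₆_qExpansion_coeff {m : ℕ} (hm : m ≠ 0) :
    coeff m (qExpansion 1 E₆) = -504 * σ 5 m := by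
  norm_num [E_qExpansion_coeff _ ⟨3, rfl⟩, hm, show bernoulli 6 = 1 / 42 by decide +kernel]

theorem E₁₀_qExpansion_coeff {m : ℕ} (hm : m ≠ 0) :
    coeff m (qExpansion 1 E₁₀) = -264 * σ 9 m := by
  norm_num [E_qExpansion_coeff _ ⟨5, rfl⟩, hm, show bernoulli 10 = 5 / 66 by decide +kernel]

theorem E₄_mul_E₆ : mcast (by norm_num) (E₄.mul E₆) = E₁₀ := by
  apply eq_of_weight_lt_twelve_of_qExpansion_coeff_zero_eq (by norm_num)
  simp only [ModularForm.qExpansion_mcast,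
    ModularForm.qExpansion_mul one_pos one_mem_strictPeriods_SL, coeff_mul,
    Finset.Nat.antidiagonal_zero, Finset.sum_singleton, E_qExpansion_coeff_zero _ ⟨2, rfl⟩,
    E_qExpansion_coeff_zero _ ⟨3, rfl⟩, E_qExpansion_coeff_zero _ ⟨5, rfl⟩, mul_one]

theorem qExpansion_E₄_mul_qExpansion_E₆ :
    qExpansion 1 E₄ * qExpansion 1 E₆ = qExpansion 1 E₁₀ := by
  rw [← ModularForm.qExpansion_mul one_pos one_mem_strictPeriods_SL, ← E₄_mul_E₆,
    ModularForm.qExpansion_mcast]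

end ModularForm

/-- `11 σ₉(n) = 21 σ₅(n) - 10 σ₃(n) + 5040 ∑_{m=1}^{n-1} σ₃(m) σ₅(n-m)`
for every positive integer `n`. -/
theorem sigma_nine_eq (n : ℕ) (hn : 0 < n) :
    (11 : ℤ) * ArithmeticFunction.sigma 9 n = 21 * ArithmeticFunction.sigma 5 n - 10 * ArithmeticFunction.sigma 3 n +
      5040 * ∑ m ∈ Finset.Ico 1 n, (ArithmeticFunction.sigma 3 m : ℤ) * ArithmeticFunction.sigma 5 (n - m) := by
  have hcoeff := congrArg (coeff n) qExpansion_E₄_mul_qExpansion_E₆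
  have hconv : ∑ m ∈ Finset.Ico 1 n, coeff m (qExpansion 1 E₄) * coeff (n - m) (qExpansion 1 E₆) =
      -120960 * ∑ m ∈ Finset.Ico 1 n, (σ 3 m : ℂ) * σ 5 (n - m) := by
    rw [Finset.mul_sum]
    refine Finset.sum_congr rfl fun m hm ↦ ?_
    rw [Finset.mem_Ico] at hm
    rw [E₄_qExpansion_coeff (by omega), E₆_qExpansion_coeff (by omega)]
    ring
  rw [coeff_mul_eq_add_sum_Ico _ _ hn, hconv, E₄_qExpansion_coeff hn.ne',
    E₆_qExpansion_coeff hn.ne', E₁₀_qExpansion_coeff hn.ne', E_qExpansion_coeff_zero _ ⟨2, rfl⟩,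
    E_qExpansion_coeff_zero _ ⟨3, rfl⟩] at hcoeff
  apply Int.cast_injective (α := ℂ)
  push_cast
  linear_combination hcoeff / 24
end

section
/- For q with |q| < 1, ∑_{n∈ℤ} (-1)^n q^(n²) = ∏_{n≥1} (1 - q^(2n)) (1 - q^(2n-1))². -/
open Finset Filter Topology

noncomputable section

namespace Theta4Aux

variable {R : Type*} [CommRing R]

def B (t : R) : ℕ → ℕ → R
  | _, 0 => 1
  | 0, _+1 => 0
  | n+1, k+1 => B t n (k+1) + t ^ (n-k) * B t n k

lemma B_zero (t : R) (n : ℕ) : B t n 0 = 1 := by cases n <;> rfl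
lemma B_succ (t : R) (n k : ℕ) :
    B t (n+1) (k+1) = B t n (k+1) + t ^ (n-k) * B t n k := rfl
lemma B_eq_zero (t : R) : ∀ n k, n < k → B t n k = 0
  | 0, _+1, _ => rfl
  | n+1, k+1, h => by
      rw [B_succ, B_eq_zero t n (k+1) (by omega), B_eq_zero t n k (by omega)]; ring
lemma B_self (t : R) : ∀ n, B t n n = 1
  | 0 => rfl
  | n+1 => by rw [B_succ, B_eq_zero t n (n+1) (by omega), B_self t n]; simp

/-- partial products of the q-Pochhammer symbol `(t;t)_n` -/
def Pf (t : R) (n : ℕ) : R := ∏ j ∈ range n, (1 - t ^ (j+1))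

lemma Pf_zero (t : R) : Pf t 0 = 1 := by simp [Pf]

lemma Pf_succ (t : R) (n : ℕ) : Pf t (n+1) = Pf t n * (1 - t ^ (n+1)) := by
  simp [Pf, prod_range_succ]

lemma B_mul_Pf (t : R) : ∀ n k, k ≤ n → B t n k * Pf t k * Pf t (n - k) = Pf t n
  | 0, 0, _ => by simp [Pf_zero, B_zero]
  | n+1, 0, _ => by simp [Pf_zero, B_zero]
  | n+1, k+1, h => by
    rw [B_succ]
    rcases Nat.lt_or_ge (k+1) (n+1) with hlt | hge
    · have hk1n : k + 1 ≤ n := by omega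
      have hkn : k ≤ n := by omega
      have e1 : n + 1 - (k+1) = (n - (k+1)) + 1 := by omega
      have e2 : n - k = (n - (k+1)) + 1 := by omega
      have e3 : (n - (k+1)) + 1 + (k + 1) = n + 1 := by omega
      calc (B t n (k+1) + t ^ (n-k) * B t n k) * Pf t (k+1) * Pf t (n+1-(k+1))
          = (B t n (k+1) * Pf t (k+1) * Pf t (n - (k+1))) * (1 - t ^ (n-k))
            + t ^ (n-k) * (B t n k * Pf t k * Pf t (n - k)) * (1 - t ^ (k+1)) := by
              simp only [e1, e2, Pf_succ]; ring
        _ = Pf t n * (1 - t ^ (n-k)) + t ^ (n-k) * Pf t n * (1 - t ^ (k+1)) := by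
              rw [B_mul_Pf t n (k+1) hk1n, B_mul_Pf t n k hkn]
        _ = Pf t n * (1 - t ^ ((n-k) + (k+1))) := by rw [pow_add]; ring
        _ = Pf t (n+1) := by rw [show n - k + (k+1) = n + 1 by omega, Pf_succ]
    · have hk : k = n := by omega
      subst hk
      rw [B_eq_zero t k (k+1) (by omega), B_self t k]
      simp [Pf_zero]


/-- triangular number -/
def e (k : ℕ) : ℕ := ∑ i ∈ range k, i

lemma e_succ (k : ℕ) : e (k+1) = e k + k := by
  simp [e, Finset.sum_range_succ]

/-- The Gauss q-binomial theorem. -/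
lemma qbinom (t x : R) : ∀ n, ∏ j ∈ range n, (1 + x * t ^ j)
    = ∑ k ∈ range (n+1), t ^ e k * B t n k * x ^ k
  | 0 => by simp [e, B_zero]
  | n+1 => by
    rw [prod_range_succ, qbinom t x n]
    have h1 : ∀ k ∈ range (n+1), t ^ e (k+1) * B t (n+1) (k+1) * x ^ (k+1)
        = t ^ e (k+1) * B t n (k+1) * x ^ (k+1)
          + (t ^ e k * B t n k * x ^ k) * (x * t ^ n) := by
      intro k hk
      have hk' : k ≤ n := by have := mem_range.mp hk; omega
      rw [B_succ]
      have h2 : e (k+1) + (n - k) = e k + n := by have := e_succ k; omega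
      calc t ^ e (k+1) * (B t n (k+1) + t ^ (n-k) * B t n k) * x ^ (k+1)
          = t ^ e (k+1) * B t n (k+1) * x ^ (k+1)
            + t ^ (e (k+1) + (n-k)) * B t n k * x ^ (k+1) := by rw [pow_add]; ring
        _ = _ := by rw [h2, pow_add, pow_succ]; ring
    rw [Finset.sum_range_succ' (fun k => t ^ e k * B t (n+1) k * x ^ k) (n+1),
      Finset.sum_congr rfl h1, Finset.sum_add_distrib,
      Finset.sum_range_succ (fun k => t ^ e (k+1) * B t n (k+1) * x ^ (k+1)) n,
      B_eq_zero t n (n+1) (by omega)]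
    rw [mul_add, mul_one, ← Finset.sum_mul,
      Finset.sum_range_succ' (fun k => t ^ e k * B t n k * x ^ k) n]
    simp [B_zero, e]
    ring


lemma prod_zpow_sum (q : ℂ) (hq0 : q ≠ 0) (n : ℕ) (f : ℕ → ℤ) :
    ∏ i ∈ range n, q ^ f i = q ^ (∑ i ∈ range n, f i) := by
  induction n with
  | zero => simp
  | succ n ih => rw [prod_range_succ, sum_range_succ, ih, zpow_add₀ hq0]

lemma sum_odd (N : ℕ) : ∑ i ∈ range N, (2*(i:ℤ)+1) = (N:ℤ)^2 := by
  induction N with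
  | zero => simp
  | succ n ih => rw [Finset.sum_range_succ, ih]; push_cast; ring

lemma e_mul_two (k : ℕ) : e k * 2 = k * (k - 1) := Finset.sum_range_id_mul_two k

lemma key (q : ℂ) (hq0 : q ≠ 0) (N : ℕ) :
    (∏ i ∈ range N, (1 - q ^ (2*i+1)))^2
    = ∑ k ∈ range (2*N+1), (-1 : ℂ) ^ ((N:ℤ) - k) * q ^ (((N:ℤ) - k)^2) * B (q^2) (2*N) k := by
  have hm1 : (-1 : ℂ) ≠ 0 := by norm_num
  have hqb := qbinom (q^2) (-(q ^ ((1:ℤ) - 2*N))) (2*N)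
  -- LHS of the q-binomial identity
  have hL : ∏ j ∈ range (2*N), ((1:ℂ) + (-(q ^ ((1:ℤ) - 2*N))) * (q^2) ^ j)
      = (-1:ℂ)^N * q ^ (-(N:ℤ)^2) * (∏ i ∈ range N, (1 - q ^ (2*i+1)))^2 := by
    have hfac : ∀ j : ℕ, (1:ℂ) + (-(q ^ ((1:ℤ) - 2*N))) * (q^2) ^ j
        = 1 - q ^ (2*(j:ℤ) + 1 - 2*N) := by
      intro j
      rw [← pow_mul, ← zpow_natCast q (2*j), neg_mul, ← sub_eq_add_neg, ← zpow_add₀ hq0]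
      congr 2
      push_cast; ring
    rw [prod_congr rfl fun j _ => hfac j]
    rw [two_mul N, prod_range_add (fun j => 1 - q ^ (2*(j:ℤ) + 1 - 2*(N:ℤ))) N N]
    have h2nd : ∏ i ∈ range N, ((1:ℂ) - q ^ (2*((N+i : ℕ):ℤ) + 1 - 2*N))
        = ∏ i ∈ range N, (1 - q ^ (2*i+1)) := by
      refine prod_congr rfl fun i _ => ?_
      rw [show 2*((N+i : ℕ):ℤ) + 1 - 2*(N:ℤ) = ((2*i+1 : ℕ) : ℤ) by push_cast; ring,
        zpow_natCast]
    have h1st : ∏ i ∈ range N, ((1:ℂ) - q ^ (2*(i:ℤ) + 1 - 2*N))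
        = (-1:ℂ)^N * q ^ (-(N:ℤ)^2) * ∏ i ∈ range N, (1 - q ^ (2*i+1)) := by
      rw [← prod_range_reflect (fun i => (1:ℂ) - q ^ (2*(i:ℤ) + 1 - 2*(N:ℤ))) N]
      have hfac2 : ∀ i ∈ range N, (1:ℂ) - q ^ (2*((N-1-i : ℕ):ℤ) + 1 - 2*(N:ℤ))
          = (-q ^ (-(2*(i:ℤ)+1))) * (1 - q ^ (2*i+1)) := by
        intro i hi
        have hiN : i < N := mem_range.mp hi
        have hcast : ((N-1-i : ℕ) : ℤ) = (N:ℤ) - 1 - i := by omega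
        have hexp : 2*((N-1-i : ℕ):ℤ) + 1 - 2*(N:ℤ) = -(2*(i:ℤ)+1) := by
          rw [hcast]; ring
        rw [hexp]
        have hcan : q ^ (-(2*(i:ℤ)+1)) * q ^ (2*(i:ℤ)+1) = 1 := by
          rw [← zpow_add₀ hq0, show -(2*(i:ℤ)+1) + (2*(i:ℤ)+1) = 0 by ring, zpow_zero]
        have hnp : (q : ℂ) ^ (2*i+1) = q ^ (2*(i:ℤ)+1) := by
          rw [← zpow_natCast q (2*i+1)]; norm_cast
        rw [hnp]
        calc (1:ℂ) - q ^ (-(2*(i:ℤ)+1))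
            = q ^ (-(2*(i:ℤ)+1)) * q ^ (2*(i:ℤ)+1) - q ^ (-(2*(i:ℤ)+1)) := by rw [hcan]
          _ = (-q ^ (-(2*(i:ℤ)+1))) * (1 - q ^ (2*(i:ℤ)+1)) := by ring
      rw [prod_congr rfl hfac2, prod_mul_distrib]
      have : ∀ i : ℕ, (-q ^ (-(2*(i:ℤ)+1))) = (-1) * q ^ (-(2*(i:ℤ)+1)) := fun i => by ring
      rw [prod_congr rfl fun i _ => this i, prod_mul_distrib, prod_const, card_range,
        prod_zpow_sum q hq0, Finset.sum_neg_distrib, sum_odd]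
    rw [h1st, h2nd]
    ring
  -- RHS of the q-binomial identity
  have hR : ∀ k ∈ range (2*N+1), (q^2) ^ e k * B (q^2) (2*N) k * (-(q ^ ((1:ℤ) - 2*N))) ^ k
      = (-1:ℂ)^k * q ^ ((k:ℤ)*(k-1) + (1 - 2*N)*k) * B (q^2) (2*N) k := by
    intro k hk
    have h1 : (-(q ^ ((1:ℤ) - 2*N))) ^ k = (-1:ℂ)^k * q ^ (((1:ℤ) - 2*N)*k) := by
      rw [neg_pow, ← zpow_natCast (q ^ ((1:ℤ) - 2*N)) k, ← zpow_mul]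
    have h2 : ((q:ℂ)^2) ^ e k = q ^ ((k:ℤ)*(k-1)) := by
      rw [← pow_mul, mul_comm 2 (e k), e_mul_two, ← zpow_natCast q (k*(k-1))]
      congr 1
      have hkk : (1:ℕ) ≤ k ∨ k = 0 := by omega
      rcases hkk with h | h
      · push_cast [Nat.cast_sub h]; ring
      · subst h; simp
    rw [h1, h2, zpow_add₀ hq0]
    ring
  rw [hL, Finset.sum_congr rfl hR] at hqb
  -- multiply by (-1)^N * q^(N^2)
  have hmul := congrArg (fun z => (-1:ℂ)^N * q ^ ((N:ℤ)^2) * z) hqb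
  have h1' : (-1:ℂ)^N * (-1:ℂ)^N = 1 := by
    rw [← mul_pow]; norm_num
  have h2' : q ^ ((N:ℤ)^2) * q ^ (-(N:ℤ)^2) = 1 := by
    rw [← zpow_add₀ hq0, show ((N:ℤ)^2) + (-(N:ℤ)^2) = 0 by ring, zpow_zero]
  calc (∏ i ∈ range N, ((1:ℂ) - q ^ (2*i+1)))^2
      = (-1:ℂ)^N * q ^ ((N:ℤ)^2) * ((-1:ℂ)^N * q ^ (-(N:ℤ)^2)
          * (∏ i ∈ range N, (1 - q ^ (2*i+1)))^2) := by
        calc (∏ i ∈ range N, ((1:ℂ) - q ^ (2*i+1)))^2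
            = ((-1:ℂ)^N * (-1:ℂ)^N) * (q ^ ((N:ℤ)^2) * q ^ (-(N:ℤ)^2))
              * (∏ i ∈ range N, (1 - q ^ (2*i+1)))^2 := by rw [h1', h2']; ring
          _ = _ := by ring
    _ = ∑ k ∈ range (2*N+1), (-1 : ℂ) ^ ((N:ℤ) - k) * q ^ (((N:ℤ) - k)^2) * B (q^2) (2*N) k := by
        rw [hmul, Finset.mul_sum]
        refine sum_congr rfl fun k hk => ?_
        have hsgn : (-1:ℂ) ^ ((N:ℤ) - k) = (-1:ℂ)^N * (-1:ℂ)^k := by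
          rw [zpow_sub₀ hm1, zpow_natCast, zpow_natCast, div_eq_mul_inv, ← inv_pow,
            inv_neg, inv_one]
        have hpow : q ^ (((N:ℤ) - k)^2) = q ^ ((N:ℤ)^2) * q ^ ((k:ℤ)*(k-1) + (1 - 2*N)*k) := by
          rw [← zpow_add₀ hq0]
          congr 1
          ring
        rw [hsgn, hpow]
        ring


/-! ### bounds -/

lemma norm_B_le (t : ℂ) : ∀ n k, ‖B t n k‖ ≤ B ‖t‖ n k
  | n, 0 => by rw [B_zero, B_zero]; simp
  | 0, k+1 => by rw [show B t 0 (k+1) = 0 from rfl, show B ‖t‖ 0 (k+1) = 0 from rfl]; simp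
  | n+1, k+1 => by
    rw [B_succ, B_succ]
    calc ‖B t n (k+1) + t ^ (n-k) * B t n k‖
        ≤ ‖B t n (k+1)‖ + ‖t‖ ^ (n-k) * ‖B t n k‖ := by
          refine (norm_add_le _ _).trans ?_
          gcongr
          rw [norm_mul, norm_pow]
      _ ≤ B ‖t‖ n (k+1) + ‖t‖ ^ (n-k) * B ‖t‖ n k := by
          have h1 := norm_B_le t n (k+1)
          have h2 := norm_B_le t n k
          have h3 : (0:ℝ) ≤ ‖t‖ ^ (n-k) := by positivity
          have h4 := norm_nonneg (B t n k)
          nlinarith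

lemma one_sub_ge {x : ℝ} (h0 : 0 ≤ x) (h1 : x < 1) :
    Real.exp (-(x / (1-x))) ≤ 1 - x := by
  have hx : (0:ℝ) < 1 - x := by linarith
  have hlog : Real.log (1-x)⁻¹ ≤ (1-x)⁻¹ - 1 := Real.log_le_sub_one_of_pos (by positivity)
  rw [Real.log_inv] at hlog
  have : -(x / (1-x)) ≤ Real.log (1-x) := by
    have : (1-x)⁻¹ - 1 = x / (1-x) := by field_simp; ring
    linarith [hlog, this ▸ hlog]
  calc Real.exp (-(x/(1-x))) ≤ Real.exp (Real.log (1-x)) := Real.exp_le_exp.mpr this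
    _ = 1 - x := Real.exp_log hx

section realBounds
variable {r : ℝ} (h0 : 0 ≤ r) (h1 : r < 1)

include h0 h1

lemma Pf_pos (n : ℕ) : 0 < Pf r n := by
  apply Finset.prod_pos
  intro j _
  have : r ^ (j+1) < 1 := pow_lt_one₀ h0 h1 (by omega)
  linarith

lemma Pf_le_one (n : ℕ) : Pf r n ≤ 1 := by
  induction n with
  | zero => simp [Pf_zero]
  | succ n ih =>
    rw [Pf_succ]
    have hp := Pf_pos h0 h1 n
    have : r ^ (n+1) ≥ 0 := by positivity
    nlinarith

lemma Pf_ge (n : ℕ) : Real.exp (-(r / (1-r)^2)) ≤ Pf r n := by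
  have hr1 : (0:ℝ) < 1 - r := by linarith
  have key : ∀ j : ℕ, Real.exp (-(r ^ (j+1) / (1-r))) ≤ 1 - r ^ (j+1) := by
    intro j
    have hx0 : 0 ≤ r ^ (j+1) := by positivity
    have hx1 : r ^ (j+1) < 1 := pow_lt_one₀ h0 h1 (by omega)
    refine le_trans (Real.exp_le_exp.mpr ?_) (one_sub_ge hx0 hx1)
    have h2 : 1 - r ≤ 1 - r ^ (j+1) := by
      have : r ^ (j+1) ≤ r := by
        calc r ^ (j+1) ≤ r ^ 1 := pow_le_pow_of_le_one h0 h1.le (by omega)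
          _ = r := pow_one r
      linarith
    have := div_le_div_of_nonneg_left hx0 hr1 h2
    linarith
  calc Real.exp (-(r / (1-r)^2))
      ≤ Real.exp (∑ j ∈ range n, -(r ^ (j+1) / (1-r))) := by
        apply Real.exp_le_exp.mpr
        have hsum : ∑ j ∈ range n, r ^ (j+1) ≤ r / (1-r) := by
          have := geom_sum_Ico_le_of_lt_one h0 h1 (m := 1) (n := n+1)
          rw [Finset.sum_Ico_eq_sum_range] at this
          simpa [pow_one, add_comm] using this
        have hneg : ∑ j ∈ range n, -(r ^ (j+1) / (1-r))
            = -((∑ j ∈ range n, r ^ (j+1)) / (1-r)) := by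
          rw [Finset.sum_div, Finset.sum_neg_distrib]
        rw [hneg]
        have hfin : (∑ j ∈ range n, r ^ (j+1)) / (1-r) ≤ (r / (1-r)) / (1-r) := by
          gcongr
        rw [div_div] at hfin
        have hsq : (1-r)^2 = (1-r) * (1-r) := sq (1-r)
        rw [hsq]
        linarith
      _ ≤ Pf r n := by
        rw [Real.exp_sum]
        exact Finset.prod_le_prod (fun j _ => (Real.exp_pos _).le) (fun j _ => key j)

lemma B_le (n k : ℕ) : B r n k ≤ Real.exp (r / (1-r)^2) ^ 2 := by
  rcases le_or_gt k n with hk | hk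
  · have hPk := Pf_pos h0 h1 k
    have hPnk := Pf_pos h0 h1 (n - k)
    have hB : B r n k = Pf r n / (Pf r k * Pf r (n-k)) := by
      rw [eq_div_iff (mul_pos hPk hPnk).ne', ← mul_assoc]
      exact B_mul_Pf r n k hk
    rw [hB]
    have h2 : Real.exp (-(r/(1-r)^2)) * Real.exp (-(r/(1-r)^2)) ≤ Pf r k * Pf r (n-k) :=
      mul_le_mul (Pf_ge h0 h1 k) (Pf_ge h0 h1 (n-k)) (Real.exp_pos _).le hPk.le
    calc Pf r n / (Pf r k * Pf r (n-k)) ≤ 1 / (Pf r k * Pf r (n-k)) :=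
          div_le_div₀ zero_le_one (Pf_le_one h0 h1 n) (mul_pos hPk hPnk) le_rfl
      _ ≤ 1 / (Real.exp (-(r/(1-r)^2)) * Real.exp (-(r/(1-r)^2))) := by
          apply one_div_le_one_div_of_le (by positivity) h2
      _ = Real.exp (r/(1-r)^2) ^ 2 := by
          have hsq : Real.exp (r/(1-r)^2) ^ 2
              = Real.exp (r/(1-r)^2) * Real.exp (r/(1-r)^2) := sq _
          rw [one_div, ← Real.exp_add, ← Real.exp_neg, hsq, ← Real.exp_add]
          congr 1
          ring
  · rw [B_eq_zero r n k hk]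
    positivity


end realBounds

/-! ### infinite products -/

lemma hasProd_one_sub (c : ℕ → ℂ) (hsum : Summable fun n => ‖c n‖)
    (hlt : ∀ n, ‖c n‖ < 1) :
    HasProd (fun n => 1 - c n) (Complex.exp (∑' n, Complex.log (1 - c n))) := by
  have hne : ∀ n, (1:ℂ) - c n ≠ 0 := by
    intro n h
    rw [sub_eq_zero] at h
    have : ‖c n‖ = 1 := by rw [← h]; simp
    linarith [hlt n]
  have hev : ∀ᶠ n in atTop, ‖c n‖ ≤ 1/2 :=
    (hsum.tendsto_atTop_zero).eventually_le_const (by norm_num)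
  have hlog : Summable fun n => Complex.log (1 - c n) := by
    apply Summable.of_norm_bounded_eventually_nat (g := fun n => 3/2 * ‖c n‖) (hsum.mul_left _)
    filter_upwards [hev] with n hn
    have := Complex.norm_log_one_add_half_le_self (z := -c n) (by simpa using hn)
    simpa [sub_eq_add_neg] using this
  have h2 := hlog.hasSum.cexp
  have hfun : (Complex.exp ∘ fun n => Complex.log (1 - c n)) = fun n => 1 - c n :=
    funext fun n => Complex.exp_log (hne n)
  rwa [hfun] at h2

variable {q : ℂ} (hq : ‖q‖ < 1) (hq0 : q ≠ 0)

lemma norm_pow_lt (k : ℕ) (hk : k ≠ 0) (hq : ‖q‖ < 1) : ‖q ^ k‖ < 1 := by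
  rw [norm_pow]
  exact pow_lt_one₀ (norm_nonneg q) hq hk

lemma summable_norm_pow (hq : ‖q‖ < 1) (c : ℕ) : Summable fun n : ℕ => ‖q ^ (2*n+c)‖ := by
  have h2 : ‖q‖^2 < 1 := pow_lt_one₀ (norm_nonneg q) hq (by norm_num)
  have := (summable_geometric_of_lt_one (by positivity) h2).mul_left (‖q‖ ^ c)
  refine this.congr fun n => ?_
  rw [norm_pow, pow_add, ← pow_mul, mul_comm (‖q‖^c), mul_comm 2 n]

/-- `HasProd` for the even factors -/
lemma hPA (hq : ‖q‖ < 1) : HasProd (fun n : ℕ => 1 - q ^ (2*n+2))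
    (Complex.exp (∑' n : ℕ, Complex.log (1 - q ^ (2*n+2)))) :=
  hasProd_one_sub _ (summable_norm_pow hq 2) fun n => norm_pow_lt _ (by omega) hq

/-- `HasProd` for the odd factors -/
lemma hPO (hq : ‖q‖ < 1) : HasProd (fun n : ℕ => 1 - q ^ (2*n+1))
    (Complex.exp (∑' n : ℕ, Complex.log (1 - q ^ (2*n+1)))) :=
  hasProd_one_sub _ (summable_norm_pow hq 1) fun n => norm_pow_lt _ (by omega) hq

section main
variable (hq : ‖q‖ < 1) (hq0 : q ≠ 0)

/-- the limit of the even partial products -/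
noncomputable def PiA (q : ℂ) : ℂ := Complex.exp (∑' n : ℕ, Complex.log (1 - q ^ (2*n+2)))

lemma PiA_ne (q : ℂ) : PiA q ≠ 0 := Complex.exp_ne_zero _

lemma Pf_eq (N : ℕ) : Pf (q^2) N = ∏ j ∈ range N, (1 - q ^ (2*j+2)) := by
  refine prod_congr rfl fun j _ => ?_
  rw [← pow_mul]
  ring_nf

lemma Pf_tendsto (hq : ‖q‖ < 1) :
    Tendsto (fun N => Pf (q^2) N) atTop (𝓝 (PiA q)) := by
  have := (hPA hq).tendsto_prod_nat
  refine this.congr fun N => ?_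
  rw [Pf_eq]

lemma Pf_ne_zero (hq : ‖q‖ < 1) (N : ℕ) : Pf (q^2) N ≠ 0 := by
  rw [Pf_eq]
  refine prod_ne_zero_iff.mpr fun j _ => ?_
  intro h
  rw [sub_eq_zero] at h
  have : ‖q ^ (2*j+2)‖ < 1 := norm_pow_lt _ (by omega) hq
  rw [← h] at this
  simp at this

/-- Gaussian binomial tendsto -/
lemma B_tendsto (hq : ‖q‖ < 1) (m : ℤ) :
    Tendsto (fun N : ℕ => B (q^2) (2*N) ((N:ℤ) - m).toNat) atTop (𝓝 (PiA q)⁻¹) := by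
  have h1 : Tendsto (fun N : ℕ => ((N:ℤ) - m).toNat) atTop atTop := by
    apply tendsto_atTop_atTop.mpr
    intro b
    exact ⟨b + m.natAbs, fun a ha => by omega⟩
  have h2 : Tendsto (fun N : ℕ => ((N:ℤ) + m).toNat) atTop atTop := by
    apply tendsto_atTop_atTop.mpr
    intro b
    exact ⟨b + m.natAbs, fun a ha => by omega⟩
  have h3 : Tendsto (fun N : ℕ => 2*N) atTop atTop := by
    apply tendsto_atTop_atTop.mpr
    intro b
    exact ⟨b, fun a ha => by omega⟩
  have hA := (Pf_tendsto hq).comp h3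
  have hB := ((Pf_tendsto hq).comp h1).inv₀ (PiA_ne q)
  have hC := ((Pf_tendsto hq).comp h2).inv₀ (PiA_ne q)
  have hlim := (hA.mul hB).mul hC
  have hval : PiA q * (PiA q)⁻¹ * (PiA q)⁻¹ = (PiA q)⁻¹ := by
    field_simp
  rw [hval] at hlim
  apply hlim.congr'
  filter_upwards [eventually_ge_atTop m.natAbs] with N hN
  have hk : ((N:ℤ) - m).toNat ≤ 2*N := by omega
  have hnk : 2*N - ((N:ℤ) - m).toNat = ((N:ℤ) + m).toNat := by omega
  have hmul := B_mul_Pf (q^2) (2*N) (((N:ℤ) - m).toNat) hk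
  rw [hnk] at hmul
  have e1 : Pf (q^2) (((N:ℤ) - m).toNat) ≠ 0 := Pf_ne_zero hq _
  have e2 : Pf (q^2) (((N:ℤ) + m).toNat) ≠ 0 := Pf_ne_zero hq _
  simp only [Function.comp]
  field_simp
  rw [← hmul]
  ring

/-- the summands, cut off at `|m| ≤ N` -/
noncomputable def g (q : ℂ) (N : ℕ) (m : ℤ) : ℂ :=
  if m.natAbs ≤ N then (-1:ℂ) ^ m * q ^ (m^2) * B (q^2) (2*N) ((N:ℤ) - m).toNat else 0

lemma tsum_g (hq0 : q ≠ 0) (N : ℕ) :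
    ∑' m : ℤ, g q N m = (∏ i ∈ range N, (1 - q ^ (2*i+1)))^2 := by
  rw [key q hq0 N]
  have hvanish : ∀ m ∉ (range (2*N+1)).image (fun k : ℕ => (N:ℤ) - k), g q N m = 0 := by
    intro m hm
    rw [g, if_neg]
    intro hcond
    apply hm
    refine Finset.mem_image.mpr ⟨((N:ℤ) - m).toNat, Finset.mem_range.mpr (by omega), by omega⟩
  rw [tsum_eq_sum hvanish, Finset.sum_image (by intro a _ b _ h; beta_reduce at h; omega)]
  refine sum_congr rfl fun k hk => ?_
  have hk' : k ≤ 2*N := by have := mem_range.mp hk; omega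
  rw [g, if_pos (by omega), show ((N:ℤ) - ((N:ℤ) - k)).toNat = k by omega]

lemma norm_g_le (hq : ‖q‖ < 1) (N : ℕ) (m : ℤ) :
    ‖g q N m‖ ≤ Real.exp (‖q‖^2 / (1-‖q‖^2)^2) ^ 2 * ‖q‖ ^ (m.natAbs^2) := by
  have h0 : (0:ℝ) ≤ ‖q‖ := norm_nonneg q
  have ht1 : ‖q‖^2 < 1 := pow_lt_one₀ h0 hq (by norm_num)
  have hK : (0:ℝ) ≤ Real.exp (‖q‖^2 / (1-‖q‖^2)^2) ^ 2 := by positivity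
  rw [g]
  split_ifs with hc
  · rw [norm_mul, norm_mul]
    have e1 : ‖(-1:ℂ) ^ m‖ = 1 := by
      rw [norm_zpow]
      simp
    have e2 : ‖q ^ (m^2)‖ = ‖q‖ ^ (m.natAbs^2) := by
      rw [show (m^2 : ℤ) = ((m.natAbs^2 : ℕ) : ℤ) by rw [Nat.cast_pow, Int.natAbs_sq],
        zpow_natCast, norm_pow]
    have e3 : ‖B (q^2) (2*N) ((N:ℤ) - m).toNat‖ ≤ Real.exp (‖q‖^2 / (1-‖q‖^2)^2) ^ 2 := by
      refine (norm_B_le (q^2) _ _).trans ?_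
      have : ‖(q:ℂ)^2‖ = ‖q‖^2 := norm_pow q 2
      rw [this]
      exact B_le (by positivity) ht1 _ _
    rw [e1, e2, one_mul]
    calc ‖q‖ ^ (m.natAbs^2) * ‖B (q^2) (2*N) ((N:ℤ) - m).toNat‖
        ≤ ‖q‖ ^ (m.natAbs^2) * (Real.exp (‖q‖^2 / (1-‖q‖^2)^2) ^ 2) := by
          apply mul_le_mul_of_nonneg_left e3 (by positivity)
      _ = _ := by ring
  · simp
    positivity

lemma summable_bound (hq : ‖q‖ < 1) (K : ℝ) :
    Summable fun m : ℤ => K * ‖q‖ ^ (m.natAbs^2) := by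
  apply Summable.mul_left
  have hnat : Summable fun n : ℕ => ‖q‖ ^ (n^2) := by
    apply (summable_geometric_of_lt_one (norm_nonneg q) hq).of_nonneg_of_le
      (fun n => by positivity)
    intro n
    exact pow_le_pow_of_le_one (norm_nonneg q) hq.le (Nat.le_self_pow two_ne_zero n)
  apply Summable.of_nat_of_neg_add_one
  · simpa using hnat
  · have h2 := hnat.comp_injective (i := fun n : ℕ => n+1) (add_left_injective 1)
    refine h2.congr fun n => ?_
    show ‖q‖ ^ ((n+1)^2) = _
    have h3 : ((-((n:ℤ)+1))).natAbs = n+1 := by omega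
    rw [h3]

theorem main (hq : ‖q‖ < 1) (hq0 : q ≠ 0) :
    ∑' n : ℤ, (-1 : ℂ) ^ n * q ^ (n ^ 2) =
    ∏' n : ℕ, ((1 - q ^ (2 * (n + 1))) * (1 - q ^ (2 * (n + 1) - 1)) ^ 2) := by
  set K := Real.exp (‖q‖^2 / (1-‖q‖^2)^2) ^ 2 with hKdef
  -- dominated convergence
  have hdom : Tendsto (fun N => ∑' m : ℤ, g q N m) atTop
      (𝓝 (∑' m : ℤ, (-1:ℂ) ^ m * q ^ (m^2) * (PiA q)⁻¹)) := by
    apply tendsto_tsum_of_dominated_convergence (summable_bound hq K)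
    · intro m
      have hb := B_tendsto hq m
      have := (tendsto_const_nhds (x := (-1:ℂ) ^ m * q ^ (m^2)) (f := atTop)).mul hb
      apply this.congr'
      filter_upwards [eventually_ge_atTop m.natAbs] with N hN
      rw [g, if_pos hN]
    · exact Eventually.of_forall fun N m => norm_g_le hq N m
  have hsq : Tendsto (fun N => (∏ i ∈ range N, (1 - q ^ (2*i+1)))^2) atTop
      (𝓝 ((Complex.exp (∑' n : ℕ, Complex.log (1 - q ^ (2*n+1))))^2)) := by
    exact ((hPO hq).tendsto_prod_nat).pow 2
  have heq : (fun N => ∑' m : ℤ, g q N m)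
      = fun N => (∏ i ∈ range N, (1 - q ^ (2*i+1)))^2 := funext fun N => tsum_g hq0 N
  rw [heq] at hdom
  have huniq := tendsto_nhds_unique hdom hsq
  set PO := Complex.exp (∑' n : ℕ, Complex.log (1 - q ^ (2*n+1))) with hPOdef
  -- sum identity
  have hsum_eq : (∑' m : ℤ, (-1:ℂ) ^ m * q ^ (m^2) * (PiA q)⁻¹)
      = (∑' m : ℤ, (-1:ℂ) ^ m * q ^ (m^2)) * (PiA q)⁻¹ := tsum_mul_right
  rw [hsum_eq] at huniq
  have hfinal : (∑' m : ℤ, (-1:ℂ) ^ m * q ^ (m^2)) = PiA q * PO^2 := by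
    have := congrArg (fun z => z * PiA q) huniq
    rw [mul_assoc, inv_mul_cancel₀ (PiA_ne q), mul_one] at this
    rw [this]; ring
  rw [hfinal]
  -- identify the RHS product
  have hprod : HasProd (fun n : ℕ => (1 - q ^ (2*(n+1))) * (1 - q ^ (2*(n+1)-1)) ^ 2)
      (PiA q * PO^2) := by
    have h1 := (hPA hq).mul ((hPO hq).mul (hPO hq))
    have h2 : (fun n : ℕ => (1 - q ^ (2*n+2)) * ((1 - q ^ (2*n+1)) * (1 - q ^ (2*n+1))))
        = fun n : ℕ => (1 - q ^ (2*(n+1))) * (1 - q ^ (2*(n+1)-1)) ^ 2 := by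
      funext n
      rw [show 2*(n+1)-1 = 2*n+1 by omega, show 2*(n+1) = 2*n+2 by ring, sq]
    rw [h2] at h1
    have hval2 : PiA q * PO ^ 2
        = Complex.exp (∑' n : ℕ, Complex.log (1 - q ^ (2*n+2))) * (PO * PO) := by
      rw [sq]; rfl
    rw [hval2, hPOdef]
    exact h1
  rw [hprod.tprod_eq]

end main
end Theta4Aux

open Theta4Aux in
/-- For `‖q‖ < 1`, `∑_{n∈ℤ} (-1)^n q^(n²) = ∏_{n≥1} (1 - q^(2n))(1 - q^(2n-1))²`. -/
theorem theta_four_product (q : ℂ) (hq : ‖q‖ < 1) :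
    ∑' n : ℤ, (-1 : ℂ) ^ n * q ^ (n ^ 2) =
    ∏' n : ℕ, ((1 - q ^ (2 * (n + 1))) * (1 - q ^ (2 * (n + 1) - 1)) ^ 2) := by
  by_cases hq0 : q = 0
  · subst hq0
    have hl : ∑' n : ℤ, (-1:ℂ) ^ n * (0:ℂ) ^ (n^2) = 1 := by
      rw [tsum_eq_single 0 ?_]
      · norm_num
      · intro b hb
        rw [zero_zpow _ (pow_ne_zero 2 hb), mul_zero]
    rw [hl]
    have hr : (fun n : ℕ => (1 - (0:ℂ) ^ (2*(n+1))) * (1 - (0:ℂ) ^ (2*(n+1)-1)) ^ 2)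
        = fun _ => (1:ℂ) := by
      funext n
      rw [zero_pow (by omega), zero_pow (by omega)]
      norm_num
    rw [hr, tprod_one]
  · exact main hq hq0
end
end
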